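/- arXiv:2311.15814 — 7 statements merged into one kernel-verified Lean document; each statement's English description precedes it below -/
import Mathlib

section
/- Let b : ℤ^N × ℤ^N → ℤ/2 be a symmetric bilinear form, e_1,…,e_N the standard basis of ℤ^N, and b_{ij} = b(e_i, e_j) ∈ ℤ/2. Then the function q : ℤ^N → ℤ/2 defined by q(Σ_i x_i e_i) = Σ_{i=1}^N ⌊x_i/2⌋·b_{ii} + Σ_{1 ≤ i < j ≤ N} x_i·b_{ij}·x_j (where the integers ⌊x_i/2⌋, x_i, x_j are reduced modulo 2) is a quadratic refinement of b, i.e., q(x+y) = q(x) + q(y) + b(x,y) for all x, y ∈ ℤ^N. -/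
private lemma cast_emod2 (x : ℤ) : ((x % 2 : ℤ) : ZMod 2) = (x : ZMod 2) := by
  conv_rhs => rw [← Int.emod_add_mul_ediv x 2]
  push_cast
  simp [show (2 : ZMod 2) = 0 from rfl]

private lemma fdiv_add2 (x y : ℤ) :
    (((x + y).fdiv 2 : ℤ) : ZMod 2)
      = ((x.fdiv 2 : ℤ) : ZMod 2) + ((y.fdiv 2 : ℤ) : ZMod 2) + (x : ZMod 2) * (y : ZMod 2) := by
  have h : (x + y).fdiv 2 = x.fdiv 2 + y.fdiv 2 + (x % 2) * (y % 2) := by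
    rw [Int.fdiv_eq_ediv_of_nonneg _ (by norm_num), Int.fdiv_eq_ediv_of_nonneg _ (by norm_num),
      Int.fdiv_eq_ediv_of_nonneg _ (by norm_num)]
    rcases Int.emod_two_eq x with h | h <;> rcases Int.emod_two_eq y with h' | h' <;>
      rw [h, h'] <;> omega
  rw [h]
  push_cast
  rw [cast_emod2, cast_emod2]

/-- **The explicit quadratic refinement formula.**
Let `b` be a symmetric bilinear form on `ℤ^N` with values in `ℤ/2`, let `e i = Pi.single i 1`
be the standard basis vectors, and `b_{ij} = b (e i) (e j)`.  Then the function
`q (Σ_i x_i e_i) = Σ_i ⌊x_i/2⌋ b_{ii} + Σ_{i<j} x_i b_{ij} x_j`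
(where the integers `⌊x_i/2⌋`, `x_i`, `x_j` are reduced mod 2) is a quadratic refinement of `b`. -/
theorem explicit_quadratic_refinement (N : ℕ)
    (b : (Fin N → ℤ) → (Fin N → ℤ) → ZMod 2)
    (hadd_left : ∀ x y z : Fin N → ℤ, b (x + y) z = b x z + b y z)
    (hadd_right : ∀ x y z : Fin N → ℤ, b x (y + z) = b x y + b x z)
    (hsymm : ∀ x y : Fin N → ℤ, b x y = b y x)
    (q : (Fin N → ℤ) → ZMod 2)
    (hq : ∀ x : Fin N → ℤ,
      q x = (∑ i : Fin N, (((x i).fdiv 2 : ℤ) : ZMod 2) *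
              b (Pi.single i 1) (Pi.single i 1))
          + ∑ i : Fin N, ∑ j : Fin N,
              if i < j then
                ((x i : ZMod 2)) * b (Pi.single i 1) (Pi.single j 1) * ((x j : ZMod 2))
              else 0) :
    ∀ x y : Fin N → ℤ, q (x + y) = q x + q y + b x y := by
  intro x y
  set e : Fin N → (Fin N → ℤ) := fun i => Pi.single i 1 with he
  -- zero lemmas
  have hb0r : ∀ u : Fin N → ℤ, b u 0 = 0 := by
    intro u
    have h := hadd_right u 0 0
    simp only [add_zero] at h
    exact (left_eq_add.mp h)
  have hb0l : ∀ v : Fin N → ℤ, b 0 v = 0 := by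
    intro v
    have h := hadd_left 0 0 v
    simp only [add_zero] at h
    exact (left_eq_add.mp h)
  -- the bilinear expansion
  let B1 : (Fin N → ℤ) → ((Fin N → ℤ) →+ ZMod 2) := fun w =>
    ⟨⟨(b · w), hb0l w⟩, fun a c => hadd_left a c w⟩
  let B2 : (Fin N → ℤ) → ((Fin N → ℤ) →+ ZMod 2) := fun w =>
    ⟨⟨b w, hb0r w⟩, fun a c => hadd_right w a c⟩
  have hexp : ∀ u v : Fin N → ℤ,
      b u v = ∑ i : Fin N, ∑ j : Fin N, (u i : ZMod 2) * b (e i) (e j) * (v j : ZMod 2) := by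
    intro u v
    have hsingle : ∀ (u : Fin N → ℤ) (i : Fin N), u i • e i = Pi.single i (u i) := by
      intro u i
      simp only [he]
      rw [← Pi.single_smul, smul_eq_mul, mul_one]
    have hu : u = ∑ i : Fin N, u i • e i := by
      symm
      rw [Finset.sum_congr rfl fun i _ => hsingle u i]
      exact Finset.univ_sum_single u
    have hv : v = ∑ j : Fin N, v j • e j := by
      symm
      rw [Finset.sum_congr rfl fun j _ => hsingle v j]
      exact Finset.univ_sum_single v
    calc b u v = B1 v (∑ i : Fin N, u i • e i) := by rw [← hu]; rfl
      _ = ∑ i : Fin N, B1 v (u i • e i) := map_sum _ _ _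
      _ = ∑ i : Fin N, (u i : ZMod 2) * b (e i) v := by
          refine Finset.sum_congr rfl fun i _ => ?_
          rw [map_zsmul]
          show (u i) • b (e i) v = _
          rw [zsmul_eq_mul]
      _ = ∑ i : Fin N, (u i : ZMod 2) * B2 (e i) (∑ j : Fin N, v j • e j) := by rw [← hv]; rfl
      _ = ∑ i : Fin N, ∑ j : Fin N, (u i : ZMod 2) * b (e i) (e j) * (v j : ZMod 2) := by
          refine Finset.sum_congr rfl fun i _ => ?_
          rw [map_sum, Finset.mul_sum]
          refine Finset.sum_congr rfl fun j _ => ?_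
          rw [map_zsmul]
          show (u i : ZMod 2) * ((v j) • b (e i) (e j)) = _
          rw [zsmul_eq_mul]
          ring
  -- abbreviations
  set C : Fin N → Fin N → ZMod 2 := fun i j => b (e i) (e j) with hC
  -- diagonal part
  have diag : ∑ i : Fin N, ((((x + y) i).fdiv 2 : ℤ) : ZMod 2) * C i i
      = (∑ i : Fin N, (((x i).fdiv 2 : ℤ) : ZMod 2) * C i i)
      + (∑ i : Fin N, (((y i).fdiv 2 : ℤ) : ZMod 2) * C i i)
      + ∑ i : Fin N, (x i : ZMod 2) * C i i * (y i : ZMod 2) := by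
    rw [← Finset.sum_add_distrib, ← Finset.sum_add_distrib]
    refine Finset.sum_congr rfl fun i _ => ?_
    have : (x + y) i = x i + y i := rfl
    rw [this, fdiv_add2]
    ring
  -- cross part
  have cross : (∑ i : Fin N, ∑ j : Fin N,
        if i < j then (((x + y) i : ZMod 2)) * C i j * (((x + y) j : ZMod 2)) else 0)
      = (∑ i : Fin N, ∑ j : Fin N, if i < j then ((x i : ZMod 2)) * C i j * ((x j : ZMod 2)) else 0)
      + (∑ i : Fin N, ∑ j : Fin N, if i < j then ((y i : ZMod 2)) * C i j * ((y j : ZMod 2)) else 0)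
      + (∑ i : Fin N, ∑ j : Fin N, if i < j then ((x i : ZMod 2)) * C i j * ((y j : ZMod 2)) else 0)
      + ∑ i : Fin N, ∑ j : Fin N, if i < j then ((y i : ZMod 2)) * C i j * ((x j : ZMod 2)) else 0 := by
    rw [← Finset.sum_add_distrib, ← Finset.sum_add_distrib, ← Finset.sum_add_distrib]
    refine Finset.sum_congr rfl fun i _ => ?_
    rw [← Finset.sum_add_distrib, ← Finset.sum_add_distrib, ← Finset.sum_add_distrib]
    refine Finset.sum_congr rfl fun j _ => ?_
    have hi : (x + y) i = x i + y i := rfl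
    have hj : (x + y) j = x j + y j := rfl
    rw [hi, hj]
    push_cast
    split_ifs
    · ring
    · simp
  -- splitting b x y into diagonal, upper, lower parts
  have hbxy : b x y
      = (∑ i : Fin N, (x i : ZMod 2) * C i i * (y i : ZMod 2))
      + (∑ i : Fin N, ∑ j : Fin N, if i < j then ((x i : ZMod 2)) * C i j * ((y j : ZMod 2)) else 0)
      + ∑ i : Fin N, ∑ j : Fin N, if i < j then ((y i : ZMod 2)) * C i j * ((x j : ZMod 2)) else 0 := by
    rw [hexp x y]
    have split : ∀ i j : Fin N, (x i : ZMod 2) * C i j * (y j : ZMod 2)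
        = (if i = j then (x i : ZMod 2) * C i j * (y j : ZMod 2) else 0)
        + (if i < j then (x i : ZMod 2) * C i j * (y j : ZMod 2) else 0)
        + (if j < i then (x i : ZMod 2) * C i j * (y j : ZMod 2) else 0) := by
      intro i j
      rcases lt_trichotomy i j with h | h | h
      · simp [h, ne_of_lt h, asymm h]
      · simp [h, lt_irrefl]
      · simp [h, (ne_of_lt h).symm, asymm h]
    calc ∑ i : Fin N, ∑ j : Fin N, (x i : ZMod 2) * C i j * (y j : ZMod 2)
        = (∑ i : Fin N, ∑ j : Fin N, if i = j then (x i : ZMod 2) * C i j * (y j : ZMod 2) else 0)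
        + (∑ i : Fin N, ∑ j : Fin N, if i < j then (x i : ZMod 2) * C i j * (y j : ZMod 2) else 0)
        + ∑ i : Fin N, ∑ j : Fin N, if j < i then (x i : ZMod 2) * C i j * (y j : ZMod 2) else 0 := by
          rw [← Finset.sum_add_distrib, ← Finset.sum_add_distrib]
          refine Finset.sum_congr rfl fun i _ => ?_
          rw [← Finset.sum_add_distrib, ← Finset.sum_add_distrib]
          exact Finset.sum_congr rfl fun j _ => split i j
      _ = _ := by
          congr 1
          · congr 1
            simp [Finset.sum_ite_eq]
          · rw [Finset.sum_comm]
            refine Finset.sum_congr rfl fun i _ => ?_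
            refine Finset.sum_congr rfl fun j _ => ?_
            have hsym : C j i = C i j := by
              simp only [hC]
              exact hsymm (e j) (e i)
            split_ifs
            · rw [hsym]; ring
            · rfl
  rw [hq (x + y), hq x, hq y]
  have hCdef : ∀ i j : Fin N, b (Pi.single i 1) (Pi.single j 1) = C i j := fun _ _ => rfl
  simp only [hCdef]
  rw [diag, cross, hbxy]
  ring
end

section
/- Let n be a natural number, let J be an invertible n×n complex matrix with J·conj(J) = -1 (an antiunitary 'quaternionic' structure squaring to -1, where conj denotes entrywise complex conjugation), and let M be an invertible n×n complex matrix satisfying J·conj(M)·J⁻¹ = M. Then det M is a real number and det M > 0. -/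
/-!
The antilinear map `C v = J (conj v)` squares to `-1` and commutes with `M`, so it preserves the
generalized eigenspace of `M` at every real `r`. An antilinear `C` with `C² = -1` forces even
complex dimension: its matrix `A` in a basis satisfies `A · conj A = -1`, whence
`|det A|² = (-1)^d`. So real eigenvalues of `M` have even multiplicity. Since `conj M` is similar
to `M`, the remaining eigenvalues come in conjugate pairs, and `det M` is a product of factors
`|λ|²` and even powers of nonzero reals.
-/

open Complex Module Polynomial Matrix
open scoped ComplexOrder

theorem Matrix.even_card_of_mul_map_conj_eq_neg_one {ι : Type*} [Fintype ι] [DecidableEq ι]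
    (A : Matrix ι ι ℂ) (hA : A * A.map (starRingEnd ℂ) = -1) : Even (Fintype.card ι) := by
  have hnormSq : (normSq A.det : ℂ) = (-1) ^ Fintype.card ι := by
    rw [← mul_conj, RingHom.map_det, RingHom.mapMatrix_apply, ← det_mul, hA, det_neg, det_one,
      mul_one]
  rcases Nat.even_or_odd (Fintype.card ι) with h | h
  · exact h
  · rw [h.neg_one_pow] at hnormSq
    have := congrArg re hnormSq
    simp only [ofReal_re, neg_re, one_re] at this
    linarith [normSq_nonneg A.det]

theorem Module.finrank_even_of_conj_semilinear_sq_eq_neg {V : Type*} [AddCommGroup V]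
    [Module ℂ V] [FiniteDimensional ℂ V] (c : V →ₛₗ[starRingEnd ℂ] V) (hc : ∀ v, c (c v) = -v) :
    Even (finrank ℂ V) := by
  let b := finBasis ℂ V
  let A : Matrix (Fin (finrank ℂ V)) (Fin (finrank ℂ V)) ℂ :=
    Matrix.of fun i j => b.repr (c (b j)) i
  have hcb : ∀ j, c (b j) = ∑ k, A k j • b k := fun j => (b.sum_repr (c (b j))).symm
  have hA : A * A.map (starRingEnd ℂ) = -1 := by
    ext i j
    have := congrArg (fun v => b.repr v i) (hc (b j))
    simp only [hcb, map_sum, LinearMap.map_smulₛₗ, Finset.smul_sum, smul_smul] at this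
    simpa [Matrix.mul_apply, Finsupp.single_apply, Matrix.one_apply, eq_comm, mul_comm] using this
  simpa using A.even_card_of_mul_map_conj_eq_neg_one hA

theorem Module.End.mapsTo_maxGenEigenspace_of_semilinear_comm {K V : Type*} [Field K]
    [AddCommGroup V] [Module K V] {σ : K →+* K} (C : V →ₛₗ[σ] V) (f : End K V)
    (hC : ∀ v, C (f v) = f (C v)) {μ : K} (hμ : σ μ = μ) :
    Set.MapsTo C (f.maxGenEigenspace μ) (f.maxGenEigenspace μ) := by
  set g : End K V := f - μ • 1
  have hpow : ∀ k v, C ((g ^ k) v) = (g ^ k) (C v) := by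
    intro k
    induction k with
    | zero => simp
    | succ k ih =>
      intro v
      simp only [pow_succ', Module.End.mul_apply, ih, g, LinearMap.sub_apply,
        LinearMap.smul_apply, Module.End.one_apply, map_sub, hC, LinearMap.map_smulₛₗ, hμ]
  intro v hv
  obtain ⟨k, hk⟩ := (f.mem_maxGenEigenspace μ v).mp hv
  exact (f.mem_maxGenEigenspace μ (C v)).mpr ⟨k, by rw [← hpow, hk, map_zero]⟩

namespace Matrix

variable {ι : Type*} [Fintype ι]

theorem star_mulVec_eq_map_conj (A : Matrix ι ι ℂ) (v : ι → ℂ) :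
    star (A *ᵥ v) = A.map (starRingEnd ℂ) *ᵥ star v :=
  funext fun i => RingHom.map_mulVec (starRingEnd ℂ) A v i

variable [DecidableEq ι]

noncomputable def mulVecConj (J : Matrix ι ι ℂ) : (ι → ℂ) →ₛₗ[starRingEnd ℂ] (ι → ℂ) :=
  (toLin' J).comp (starLinearEquiv ℂ : (ι → ℂ) ≃ₗ⋆[ℂ] (ι → ℂ)).toLinearMap

theorem mulVecConj_apply (J : Matrix ι ι ℂ) (v : ι → ℂ) : J.mulVecConj v = J *ᵥ star v := rfl

theorem mulVecConj_mulVecConj {J : Matrix ι ι ℂ} (hJ : J * J.map (starRingEnd ℂ) = -1)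
    (v : ι → ℂ) : J.mulVecConj (J.mulVecConj v) = -v := by
  rw [mulVecConj_apply, mulVecConj_apply, star_mulVec_eq_map_conj, star_star, mulVec_mulVec, hJ,
    neg_mulVec, one_mulVec]

theorem mulVecConj_mulVec {J M : Matrix ι ι ℂ} (hJM : J * M.map (starRingEnd ℂ) = M * J)
    (v : ι → ℂ) : J.mulVecConj (M *ᵥ v) = M *ᵥ J.mulVecConj v := by
  rw [mulVecConj_apply, mulVecConj_apply, star_mulVec_eq_map_conj, mulVec_mulVec, hJM,
    mulVec_mulVec]

theorem even_rootMultiplicity_charpoly_of_mul_map_conj {J M : Matrix ι ι ℂ}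
    (hJ : J * J.map (starRingEnd ℂ) = -1) (hJM : J * M.map (starRingEnd ℂ) = M * J) (r : ℝ) :
    Even (M.charpoly.rootMultiplicity (r : ℂ)) := by
  have hmaps := Module.End.mapsTo_maxGenEigenspace_of_semilinear_comm J.mulVecConj (toLin' M)
    (fun v => mulVecConj_mulVec hJM v) (conj_ofReal r)
  rw [← charpoly_toLin', ← LinearMap.finrank_maxGenEigenspace_eq]
  exact finrank_even_of_conj_semilinear_sq_eq_neg (J.mulVecConj.restrict hmaps)
    fun v => Subtype.ext (mulVecConj_mulVecConj hJ v)

end Matrix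

namespace Multiset

open scoped Classical in
theorem prod_pos_of_forall_im_eq_zero_of_even_count {s : Multiset ℂ} (hs : ∀ z ∈ s, z.im = 0)
    (h0 : (0 : ℂ) ∉ s) (heven : ∀ z ∈ s, Even (s.count z)) : 0 < s.prod := by
  rw [Finset.prod_multiset_count]
  refine Finset.prod_pos fun z hz => ?_
  rw [mem_toFinset] at hz
  obtain ⟨r, rfl⟩ : ∃ r : ℝ, z = r := ⟨z.re, Complex.ext rfl (hs z hz)⟩
  have hr : r ≠ 0 := fun h => h0 (by rwa [h, ofReal_zero] at hz)
  rw [← ofReal_pow, zero_lt_real]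
  exact (heven _ hz).pow_pos hr

open scoped Classical in
theorem prod_pos_of_map_conj_eq {s : Multiset ℂ} (h0 : (0 : ℂ) ∉ s)
    (hconj : s.map (starRingEnd ℂ) = s) (heven : ∀ r : ℝ, Even (s.count (r : ℂ))) :
    0 < s.prod := by
  have hsplit : s = s.filter (fun z => 0 < z.im) + s.filter (fun z => z.im < 0) +
      s.filter (fun z => z.im = 0) := by
    ext z
    simp only [count_add, count_filter]
    split_ifs <;> first | order | simp
  have hlower : s.filter (fun z => z.im < 0) =
      (s.filter (fun z => 0 < z.im)).map (starRingEnd ℂ) := by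
    conv_lhs => rw [← hconj]
    simp [filter_map]
  have hupper : (s.filter (fun z => 0 < z.im)).prod ≠ 0 :=
    prod_ne_zero fun h => h0 (mem_of_mem_filter h)
  have hreal : 0 < (s.filter (fun z => z.im = 0)).prod := by
    refine prod_pos_of_forall_im_eq_zero_of_even_count (fun z hz => (mem_filter.mp hz).2)
      (fun h => h0 (mem_of_mem_filter h)) fun z hz => ?_
    obtain ⟨-, him⟩ := mem_filter.mp hz
    obtain ⟨r, rfl⟩ : ∃ r : ℝ, z = r := ⟨z.re, Complex.ext rfl him⟩
    rw [count_filter_of_pos (p := fun z : ℂ => z.im = 0) him]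
    exact heven r
  rw [hsplit, prod_add, prod_add, hlower, ← map_multiset_prod, mul_conj]
  exact mul_pos (zero_lt_real.mpr (normSq_pos.mpr hupper)) hreal

end Multiset

/-- **EAZ class AII, complex-conjugation type.**
Let `J` be an invertible `n × n` complex matrix with `J ⬝ conj J = -1` (a quaternionic
antiunitary structure squaring to `-1`), and let `M` be an invertible `n × n` complex
matrix satisfying `J ⬝ conj M ⬝ J⁻¹ = M`.  Then `det M` is real and positive. -/
theorem det_real_pos_of_quaternionic_symmetry (n : ℕ)
    (J M : Matrix (Fin n) (Fin n) ℂ)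
    (hJunit : IsUnit J)
    (hJ : J * J.map (starRingEnd ℂ) = -1)
    (hMunit : IsUnit M)
    (hM : J * M.map (starRingEnd ℂ) * J⁻¹ = M) :
    M.det.im = 0 ∧ 0 < M.det.re := by
  classical
  have hJdet : IsUnit J.det := (isUnit_iff_isUnit_det J).mp hJunit
  have hJM : J * M.map (starRingEnd ℂ) = M * J := by
    conv_rhs => rw [← hM]
    rw [mul_assoc _ J⁻¹, nonsing_inv_mul _ hJdet, mul_one]
  have hcharpoly : M.charpoly.map (starRingEnd ℂ) = M.charpoly := by
    conv_rhs => rw [← hM]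
    rw [charpoly_mul_comm, ← mul_assoc, nonsing_inv_mul _ hJdet, one_mul, charpoly_map]
  have hroots : M.charpoly.roots.map (starRingEnd ℂ) = M.charpoly.roots := by
    rw [← (IsAlgClosed.splits _).roots_map, hcharpoly]
  have hzero : (0 : ℂ) ∉ M.charpoly.roots := fun h =>
    ((isUnit_iff_isUnit_det M).mp hMunit).ne_zero
      (by rw [det_eq_prod_roots_charpoly, Multiset.prod_eq_zero h])
  have hpos : 0 < M.det := by
    rw [det_eq_prod_roots_charpoly]
    exact Multiset.prod_pos_of_map_conj_eq hzero hroots fun r => by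
      rw [count_roots]
      exact even_rootMultiplicity_charpoly_of_mul_map_conj hJ hJM r
  obtain ⟨hre, him⟩ := pos_iff.mp hpos
  exact ⟨him.symm, hre⟩
end

section
/- Let m be a natural number, M an m×m complex matrix, and J an invertible skew-symmetric m×m complex matrix (Jᵀ = -J) such that J·Mᵀ = M·J. Then there exists a polynomial p ∈ ℂ[X] with charpoly(M) = p²; equivalently, every eigenvalue of M has even algebraic multiplicity. -/
/-!
Because `J Mᵀ = M J` and `Jᵀ = -J`, the polynomial matrix `(X - M) J` is skew-symmetric, and its
determinant is `charpoly M * det J`. A skew-symmetric matrix over a field of characteristic `≠ 2`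
has square determinant: after a permutation its top-left `2 × 2` block is invertible with
determinant `b ^ 2`, and the Schur complement of that block is again skew-symmetric. As `ℂ[X]` is
integrally closed, a square in its fraction field is already a square in `ℂ[X]`; finally `det J`
is a nonzero square in `ℂ`, so it can be divided out.
-/

open Matrix Polynomial

theorem IsIntegrallyClosed.isSquare_of_isSquare_algebraMap {R : Type*} (K : Type*) [CommRing R]
    [CommRing K] [Algebra R K] [IsFractionRing R K] [IsIntegrallyClosed R] {r : R}
    (h : IsSquare (algebraMap R K r)) : IsSquare r := by
  obtain ⟨d, hd⟩ := h
  have hint : IsIntegral R d :=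
    IsIntegral.of_pow two_pos (by rw [sq, ← hd]; exact isIntegral_algebraMap)
  obtain ⟨s, hs⟩ := isIntegral_iff.mp hint
  exact ⟨s, IsFractionRing.injective R K (by rw [map_mul, hs, hd])⟩

namespace Matrix

lemma apply_self_eq_zero_of_transpose_eq_neg {n R : Type*} [Ring R] [NoZeroDivisors R]
    (h2 : (2 : R) ≠ 0) {B : Matrix n n R} (hB : Bᵀ = -B) (i : n) : B i i = 0 := by
  have hii : B i i = -B i i := congrFun (congrFun hB i) i
  have : 2 * B i i = 0 := by rw [two_mul]; nth_rw 1 [hii]; exact neg_add_cancel _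
  exact (mul_eq_zero.mp this).resolve_left h2

lemma det_fin_two_of_transpose_eq_neg {R : Type*} [CommRing R] [NoZeroDivisors R]
    (h2 : (2 : R) ≠ 0) {A : Matrix (Fin 2) (Fin 2) R} (hA : Aᵀ = -A) : A.det = A 0 1 ^ 2 := by
  have h10 : A 1 0 = -A 0 1 := congrFun (congrFun hA 0) 1
  rw [det_fin_two, apply_self_eq_zero_of_transpose_eq_neg h2 hA 0,
    apply_self_eq_zero_of_transpose_eq_neg h2 hA 1, h10]
  ring

lemma transpose_inv_of_transpose_eq_neg {n R : Type*} [Fintype n] [DecidableEq n] [CommRing R]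
    {A : Matrix n n R} (hA : Aᵀ = -A) (hdet : IsUnit A.det) : A⁻¹ᵀ = -A⁻¹ := by
  rw [transpose_nonsing_inv, hA]
  exact inv_eq_left_inv (by rw [neg_mul_neg, nonsing_inv_mul A hdet])

lemma transpose_schur_eq_neg {m n R : Type*} [Fintype m] [DecidableEq m] [CommRing R]
    {A : Matrix m m R} {B : Matrix m n R} {C : Matrix n m R} {D : Matrix n n R}
    (hA : Aᵀ = -A) (hdet : IsUnit A.det) (hBC : Bᵀ = -C) (hD : Dᵀ = -D) :
    (D - C * A⁻¹ * B)ᵀ = -(D - C * A⁻¹ * B) := by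
  have hCB : Cᵀ = -B := by rw [← neg_neg Cᵀ, ← transpose_neg, ← hBC, transpose_transpose]
  rw [transpose_sub, transpose_mul, transpose_mul, hD, hBC, hCB,
    transpose_inv_of_transpose_eq_neg hA hdet]
  simp only [Matrix.neg_mul, Matrix.mul_neg, neg_neg, Matrix.mul_assoc]
  abel

lemma exists_det_eq_sq_mul_det_of_transpose_eq_neg {K κ : Type*} [Field K] [Fintype κ]
    [DecidableEq κ] (h2 : (2 : K) ≠ 0) {B : Matrix (Fin 2 ⊕ κ) (Fin 2 ⊕ κ) K} (hB : Bᵀ = -B)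
    (hB01 : B (.inl 0) (.inl 1) ≠ 0) :
    ∃ S : Matrix κ κ K, Sᵀ = -S ∧ B.det = B (.inl 0) (.inl 1) ^ 2 * S.det := by
  obtain ⟨hA, -, hBC, hD⟩ : B.toBlocks₁₁ᵀ = -B.toBlocks₁₁ ∧ B.toBlocks₂₁ᵀ = -B.toBlocks₁₂ ∧
      B.toBlocks₁₂ᵀ = -B.toBlocks₂₁ ∧ B.toBlocks₂₂ᵀ = -B.toBlocks₂₂ := by
    rw [← fromBlocks_toBlocks B, fromBlocks_transpose, fromBlocks_neg, fromBlocks_inj] at hB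
    exact hB
  have hdetA : B.toBlocks₁₁.det = B (.inl 0) (.inl 1) ^ 2 :=
    det_fin_two_of_transpose_eq_neg h2 hA
  have hunit : IsUnit B.toBlocks₁₁.det := by rw [hdetA]; exact (pow_ne_zero 2 hB01).isUnit
  let := invertibleOfIsUnitDet _ hunit
  refine ⟨_, transpose_schur_eq_neg hA hunit hBC hD, ?_⟩
  rw [← hdetA, ← invOf_eq_nonsing_inv, ← det_fromBlocks₁₁, fromBlocks_toBlocks]

theorem isSquare_det_of_transpose_eq_neg_fin {K : Type*} [Field K] (h2 : (2 : K) ≠ 0) {n : ℕ}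
    {B : Matrix (Fin n) (Fin n) K} (hB : Bᵀ = -B) : IsSquare B.det := by
  induction n using Nat.strong_induction_on with
  | _ n ih =>
  cases n with
  | zero => exact ⟨1, by simp⟩
  | succ n =>
  -- Either the first row vanishes, or some `B 0 j ≠ 0` with `j ≠ 0` is moved to position `(0, 1)`.
  by_cases hrow : ∀ j, B 0 j = 0
  · exact ⟨0, by rw [det_eq_zero_of_row_eq_zero 0 hrow, mul_zero]⟩
  push Not at hrow
  obtain ⟨j, hj⟩ := hrow
  have hj0 : j ≠ 0 := by rintro rfl; exact hj (apply_self_eq_zero_of_transpose_eq_neg h2 hB 0)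
  obtain ⟨k, rfl⟩ : ∃ k, n = k + 1 :=
    ⟨n - 1, by have := j.isLt; have : (j : ℕ) ≠ 0 := fun h => hj0 (Fin.ext h); omega⟩
  let e : Fin 2 ⊕ Fin k ≃ Fin (k + 2) :=
    (finSumFinEquiv.trans (finCongr (by omega))).trans (Equiv.swap 1 j)
  have he0 : e (.inl 0) = 0 :=
    Equiv.swap_apply_of_ne_of_ne (x := 0) (a := 1) (b := j) Fin.zero_ne_one hj0.symm
  have he1 : e (.inl 1) = j := Equiv.swap_apply_left (1 : Fin (k + 2)) j
  obtain ⟨S, hS, hdet⟩ := exists_det_eq_sq_mul_det_of_transpose_eq_neg h2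
    (B := B.submatrix e e) (by rw [transpose_submatrix, hB]; rfl) (by simpa [he0, he1] using hj)
  rw [← det_submatrix_equiv_self e B, hdet]
  exact (IsSquare.sq _).mul (ih k (by omega) hS)

theorem isSquare_det_of_transpose_eq_neg {R n : Type*} [CommRing R] [IsDomain R]
    [IsIntegrallyClosed R] [Fintype n] [DecidableEq n] (h2 : (2 : R) ≠ 0) {B : Matrix n n R}
    (hB : Bᵀ = -B) : IsSquare B.det := by
  let K := FractionRing R
  let BK : Matrix (Fin (Fintype.card n)) (Fin (Fintype.card n)) K :=
    reindex (Fintype.equivFin n) (Fintype.equivFin n) (B.map (algebraMap R K))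
  have hBK : BKᵀ = -BK := by
    rw [transpose_reindex, ← transpose_map, hB]
    ext i j
    simp [BK]
  have h2K : (2 : K) ≠ 0 := by
    simpa only [map_ofNat] using (map_ne_zero_iff _ (IsFractionRing.injective R K)).mpr h2
  apply IsIntegrallyClosed.isSquare_of_isSquare_algebraMap K
  rw [RingHom.map_det, RingHom.mapMatrix_apply, ← det_reindex_self (Fintype.equivFin n)]
  exact isSquare_det_of_transpose_eq_neg_fin h2K hBK

lemma map_C_mul_charmatrix_transpose {R n : Type*} [CommRing R] [Fintype n] [DecidableEq n]
    {M J : Matrix n n R} (h : J * Mᵀ = M * J) :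
    J.map C * charmatrix Mᵀ = charmatrix M * J.map C := by
  simp only [charmatrix, RingHom.mapMatrix_apply, Matrix.mul_sub, Matrix.sub_mul,
    ← Matrix.map_mul, h, (scalar_commute (X : R[X]) (fun _ => mul_comm _ _) (J.map C)).eq]

lemma transpose_charmatrix_mul_map_C {R n : Type*} [CommRing R] [Fintype n] [DecidableEq n]
    {M J : Matrix n n R} (hJ : Jᵀ = -J) (h : J * Mᵀ = M * J) :
    (charmatrix M * J.map C)ᵀ = -(charmatrix M * J.map C) := by
  rw [transpose_mul, ← transpose_map, hJ, ← charmatrix_transpose, Matrix.map_neg _ (map_neg C),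
    Matrix.neg_mul, map_C_mul_charmatrix_transpose h]

end Matrix

/-- **Transpose-type Kramers degeneracy (EAZ classes AII and A_T).**
Let `M` be an `m × m` complex matrix and `J` an invertible skew-symmetric matrix
(`Jᵀ = -J`) with `J ⬝ Mᵀ = M ⬝ J`.  Then the characteristic polynomial of `M` is a
square: there is a polynomial `p` with `charpoly M = p ^ 2`; equivalently every
eigenvalue of `M` has even algebraic multiplicity. -/
theorem charpoly_sq_of_skew_selfdual (m : ℕ)
    (M J : Matrix (Fin m) (Fin m) ℂ)
    (hJunit : IsUnit J)
    (hJskew : Jᵀ = -J)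
    (hcomm : J * Mᵀ = M * J) :
    ∃ p : Polynomial ℂ, M.charpoly = p ^ 2 := by
  have hsq : IsSquare (M.charpoly * C J.det) := by
    rw [RingHom.map_det, RingHom.mapMatrix_apply, charpoly, ← det_mul]
    exact isSquare_det_of_transpose_eq_neg two_ne_zero
      (transpose_charmatrix_mul_map_C hJskew hcomm)
  have hdet : J.det ≠ 0 := ((isUnit_iff_isUnit_det J).mp hJunit).ne_zero
  obtain ⟨c, hc⟩ := IsAlgClosed.exists_pow_nat_eq J.det⁻¹ two_pos
  obtain ⟨p, hp⟩ := hsq.mul ((IsSquare.sq c).map C)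
  refine ⟨p, ?_⟩
  rwa [hc, mul_assoc, ← C_mul, mul_inv_cancel₀ hdet, C_1, mul_one, ← sq] at hp
end

section
/- Let G be a finite group, ρ : G → GL_N(ℂ) a representation by invertible N×N complex matrices, and M an N×N complex matrix with ρ(g)·M = M·ρ(g) for all g ∈ G. Let π be an irreducible complex representation of G of dimension D with character χ (χ(g) = tr π(g)), and set P = (D/|G|)·Σ_{g∈G} χ(g⁻¹)·ρ(g). Then P is idempotent (P² = P), M commutes with P and maps the range of P into itself, and there exists a monic polynomial p ∈ ℂ[X] such that the characteristic polynomial of the restriction of M to the range of P equals p^D. In particular every nonzero eigenvalue of P·M is D-fold degenerate. -/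
/-!
The matrix `P` is the image under `ρ` of the element `e = (D/|G|) Σ χ(g⁻¹) g` of the group
algebra. Schur's lemma makes `Σ χ(g⁻¹) π(g)` a scalar on the simple `π`, and taking traces gives the
convolution identity `D Σ_g χ(g⁻¹) χ(hg) = |G| χ(h)`, which is exactly `e² = e`.

On a representation `U` where `e` acts as the identity, orthogonality of characters gives
`dim U = tr e = D · dim Hom_G(π, U)`, so `D ∣ dim U`. Since `M` commutes with `G`, its generalized
eigenspaces on the range of `P` are such representations; hence every root multiplicity of the
characteristic polynomial of `M` there is divisible by `D`, and a split monic polynomial with this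
property is a `D`-th power.
-/

open CategoryTheory Matrix Module Polynomial

lemma Module.End.mapsTo_range_of_comm {R M : Type*} [Semiring R] [AddCommMonoid M] [Module R M]
    {f g : Module.End R M} (h : Commute f g) :
    Set.MapsTo f (LinearMap.range g) (LinearMap.range g) := by
  rintro _ ⟨y, rfl⟩
  exact ⟨f y, LinearMap.congr_fun h.eq.symm y⟩

lemma Polynomial.exists_monic_eq_pow_of_dvd_rootMultiplicity {R : Type*} [CommRing R] [IsDomain R]
    {q : R[X]} (hq : q.Monic) (hs : q.Splits) {n : ℕ} (h : ∀ a, n ∣ q.rootMultiplicity a) :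
    ∃ p : R[X], p.Monic ∧ q = p ^ n := by
  classical
  refine ⟨∏ a ∈ q.roots.toFinset, (X - C a) ^ (q.rootMultiplicity a / n),
    monic_prod_of_monic _ _ fun a _ => (monic_X_sub_C a).pow _, ?_⟩
  conv_lhs => rw [hs.eq_prod_roots_of_monic hq, Finset.prod_multiset_map_count]
  rw [← Finset.prod_pow]
  refine Finset.prod_congr rfl fun a _ => ?_
  rw [← pow_mul, Nat.div_mul_cancel (h a), count_roots]

variable {k G E : Type*} [Field k] [Group G] [AddCommGroup E] [Module k E]

lemma Representation.commute_sum_char_inv_smul [Fintype G] (V : FDRep k G)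
    (σ : Representation k G E) (g : G) :
    Commute (σ g) (∑ h, V.character h⁻¹ • σ h) := by
  have hconj : ∀ h, σ g * (V.character h⁻¹ • σ h) =
      (V.character (g * h * g⁻¹)⁻¹ • σ (g * h * g⁻¹)) * σ g := by
    intro h
    rw [show (g * h * g⁻¹)⁻¹ = g * h⁻¹ * g⁻¹ by group, FDRep.char_conj, smul_mul_assoc,
      mul_smul_comm, ← map_mul, ← map_mul, inv_mul_cancel_right]
  simp_rw [Commute, SemiconjBy, Finset.mul_sum, hconj, ← Finset.sum_mul]
  congr 1
  exact (MulAut.conj g).toEquiv.sum_comp fun h => V.character h⁻¹ • σ h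

namespace FDRep

variable (V : FDRep k G)

lemma nontrivial_of_simple [Simple V] : Nontrivial V := by
  by_contra h
  rw [not_nontrivial_iff_subsingleton] at h
  apply id_nonzero V
  ext x
  exact Subsingleton.elim _ _

variable [Fintype G] [IsAlgClosed k] [CharZero k]

lemma finrank_intertwiningMap_self [Simple V] :
    finrank k (Representation.IntertwiningMap V.ρ V.ρ) = 1 := by
  have : Invertible (Nat.card G : k) := invertibleOfNonzero (by simp)
  have h := FDRep.char_orthonormal V V
  rw [if_pos ⟨Iso.refl V⟩] at h
  exact_mod_cast (Representation.card_inv_mul_sum_char_mul_char_eq_finrank V.ρ V.ρ).symm.trans h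

lemma finrank_smul_sum_char_inv_smul_ρ [Simple V] :
    (finrank k V : k) • ∑ g, V.character g⁻¹ • V.ρ g = (Fintype.card G : k) • 1 := by
  have : Nontrivial V := V.nontrivial_of_simple
  set T := ∑ g, V.character g⁻¹ • V.ρ g
  have hT : ∀ g, T ∘ₗ V.ρ g = V.ρ g ∘ₗ T := fun g =>
    (Representation.commute_sum_char_inv_smul V V.ρ g).symm
  have hid : Representation.IntertwiningMap.id V.ρ ≠ 0 := fun h => by
    obtain ⟨x, hx⟩ := exists_ne (0 : V)
    exact hx (congrArg (· x) h)
  obtain ⟨c, hc⟩ :=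
    (finrank_eq_one_iff_of_nonzero' (K := k) _ hid).mp V.finrank_intertwiningMap_self ⟨T, hT⟩
  have hcT : c • 1 = T := congrArg Representation.IntertwiningMap.toLinearMap hc
  have hsum : ∑ g, V.character g⁻¹ * V.character g = Fintype.card G := by
    have : Invertible (Nat.card G : k) := invertibleOfNonzero (by simp)
    have h := FDRep.char_orthonormal V V
    rw [if_pos ⟨Iso.refl V⟩, Nat.card_eq_fintype_card, inv_mul_eq_one₀ (by simp)] at h
    simpa only [mul_comm] using h.symm
  have hcD : c * finrank k V = Fintype.card G := by
    have h := congrArg (LinearMap.trace k V) hcT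
    simp only [map_smul, LinearMap.trace_one, smul_eq_mul, T, map_sum] at h
    rw [h, ← hsum]
    rfl
  rw [← hcT, smul_smul, mul_comm, hcD]

lemma finrank_mul_sum_char_inv_mul_char_mul [Simple V] (h : G) :
    (finrank k V : k) * ∑ g, V.character g⁻¹ * V.character (h * g) =
      Fintype.card G * V.character h := by
  have := congrArg (fun A => LinearMap.trace k V (V.ρ h * A)) V.finrank_smul_sum_char_inv_smul_ρ
  simpa [Finset.mul_sum, map_sum, mul_smul_comm, character] using this

end FDRep

namespace Representation

variable [Fintype G] (V : FDRep k G) (σ : Representation k G E)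

noncomputable def isotypicProj : Module.End k E :=
  ((finrank k V : k) / Fintype.card G) • ∑ g, V.character g⁻¹ • σ g

lemma finrank_smul_sum_char_inv_smul_mul_self [Simple V] [IsAlgClosed k] [CharZero k] :
    (finrank k V : k) • ((∑ g, V.character g⁻¹ • σ g) * ∑ g, V.character g⁻¹ • σ g) =
      (Fintype.card G : k) • ∑ g, V.character g⁻¹ • σ g := by
  have hleft : ∀ g, σ g * ∑ h, V.character h⁻¹ • σ h = ∑ h, V.character (h⁻¹ * g) • σ h := by
    intro g
    rw [Finset.mul_sum]
    refine Fintype.sum_equiv (Equiv.mulLeft g) _ _ fun h => ?_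
    simp
  calc (finrank k V : k) • ((∑ g, V.character g⁻¹ • σ g) * ∑ g, V.character g⁻¹ • σ g)
      = ∑ h, ((finrank k V : k) * ∑ g, V.character g⁻¹ * V.character (h⁻¹ * g)) • σ h := by
        simp_rw [Finset.sum_mul, smul_mul_assoc, hleft, Finset.smul_sum, Finset.mul_sum,
          Finset.sum_smul, smul_smul]
        rw [Finset.sum_comm]
    _ = (Fintype.card G : k) • ∑ g, V.character g⁻¹ • σ g := by
        simp_rw [V.finrank_mul_sum_char_inv_mul_char_mul, Finset.smul_sum, smul_smul]

lemma isotypicProj_isIdempotentElem [Simple V] [IsAlgClosed k] [CharZero k] :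
    IsIdempotentElem (isotypicProj V σ) := by
  have : Nontrivial V := V.nontrivial_of_simple
  have hD : (finrank k V : k) ≠ 0 := Nat.cast_ne_zero.mpr finrank_pos.ne'
  have hG : (Fintype.card G : k) ≠ 0 := by simp
  unfold IsIdempotentElem isotypicProj
  rw [smul_mul_smul_comm, show (finrank k V / Fintype.card G * (finrank k V / Fintype.card G) : k)
    = finrank k V / Fintype.card G ^ 2 * finrank k V by ring, ← smul_smul,
    finrank_smul_sum_char_inv_smul_mul_self, smul_smul]
  congr 1
  field_simp

lemma commute_isotypicProj (g : G) : Commute (σ g) (isotypicProj V σ) :=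
  (commute_sum_char_inv_smul V σ g).smul_right _

lemma commute_isotypicProj_of_forall_commute {f : Module.End k E} (hf : ∀ g, Commute f (σ g)) :
    Commute f (isotypicProj V σ) :=
  (Commute.sum_right _ _ _ fun g _ => (hf g).smul_right _).smul_right _

lemma coe_isotypicProj_toRepresentation_apply (U : Subrepresentation σ) (x : U.toSubmodule) :
    (isotypicProj V U.toRepresentation x : E) = isotypicProj V σ x := by
  simp [isotypicProj, Subrepresentation.toRepresentation]

lemma isotypicProj_toRepresentation_eq_one (h : isotypicProj V σ = 1) (U : Subrepresentation σ) :
    isotypicProj V U.toRepresentation = 1 := by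
  ext x
  simp [coe_isotypicProj_toRepresentation_apply, h]

noncomputable def isotypicComponent : Subrepresentation σ where
  toSubmodule := LinearMap.range (isotypicProj V σ)
  apply_mem_toSubmodule g := Module.End.mapsTo_range_of_comm (commute_isotypicProj V σ g)

lemma isotypicProj_isotypicComponent [Simple V] [IsAlgClosed k] [CharZero k] :
    isotypicProj V (isotypicComponent V σ).toRepresentation = 1 := by
  ext x
  rw [coe_isotypicProj_toRepresentation_apply]
  exact (LinearMap.IsIdempotentElem.mem_range_iff (isotypicProj_isIdempotentElem V σ)).mp x.2

lemma finrank_dvd_finrank_of_isotypicProj_eq_one [CharZero k] [FiniteDimensional k E]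
    (h : isotypicProj V σ = 1) : finrank k V ∣ finrank k E := by
  have : Invertible (Nat.card G : k) := invertibleOfNonzero (by simp)
  have htr := congrArg (LinearMap.trace k E) h
  have hchar := card_inv_mul_sum_char_mul_char_eq_finrank V.ρ σ
  simp only [isotypicProj, map_smul, map_sum, LinearMap.trace_one, smul_eq_mul] at htr
  refine ⟨finrank k (IntertwiningMap V.ρ σ), ?_⟩
  rw [← Nat.cast_inj (R := k), Nat.cast_mul, ← htr, ← hchar, Nat.card_eq_fintype_card,
    div_eq_mul_inv, mul_assoc]
  congr 2
  exact Finset.sum_congr rfl fun g _ => mul_comm _ _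

lemma exists_monic_charpoly_eq_pow_of_isotypicProj_eq_one [IsAlgClosed k] [CharZero k]
    [FiniteDimensional k E] (h : isotypicProj V σ = 1) {f : Module.End k E}
    (hf : ∀ g, Commute f (σ g)) :
    ∃ p : k[X], p.Monic ∧ f.charpoly = p ^ finrank k V := by
  refine exists_monic_eq_pow_of_dvd_rootMultiplicity f.charpoly_monic (IsAlgClosed.splits _)
    fun μ => ?_
  rw [← LinearMap.finrank_maxGenEigenspace_eq]
  let U : Subrepresentation σ :=
    ⟨f.maxGenEigenspace μ, fun g => Module.End.mapsTo_maxGenEigenspace_of_comm (hf g) μ⟩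
  exact finrank_dvd_finrank_of_isotypicProj_eq_one V U.toRepresentation
    (isotypicProj_toRepresentation_eq_one V σ h U)

lemma exists_monic_charpoly_restrict_eq_pow [Simple V] [IsAlgClosed k] [CharZero k]
    [FiniteDimensional k E] {f : Module.End k E} (hf : ∀ g, Commute f (σ g))
    (hinv : ∀ x ∈ LinearMap.range (isotypicProj V σ), f x ∈ LinearMap.range (isotypicProj V σ)) :
    ∃ p : k[X], p.Monic ∧ (f.restrict hinv).charpoly = p ^ finrank k V :=
  exists_monic_charpoly_eq_pow_of_isotypicProj_eq_one V _ (isotypicProj_isotypicComponent V σ)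
    fun g => LinearMap.restrict_commute (hf g) hinv
      ((isotypicComponent V σ).apply_mem_toSubmodule g)

end Representation

/-- **D-fold eigenvalue degeneracy on an isotypic component.**
Let `G` be a finite group, `ρ : G → GL_N(ℂ)` a matrix representation, and `M` an `N × N`
complex matrix commuting with every `ρ g`.  Let `V` be an irreducible (simple) complex
representation of `G` of dimension `D` with character `χ`, and
`P = (D/|G|) Σ_g χ(g⁻¹) ρ(g)` the corresponding isotypic projector.  Then `P² = P`,
`M` commutes with `P` and preserves the range of `P`, and the characteristic polynomial
of the restriction of `M` to the range of `P` is a `D`-th power of a monic polynomial;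
in particular every eigenvalue there is `D`-fold degenerate. -/
theorem isotypic_eigenvalue_degeneracy
    (N : ℕ) (G : Type) [Group G] [Fintype G]
    (ρ : G →* Matrix (Fin N) (Fin N) ℂ)
    (M : Matrix (Fin N) (Fin N) ℂ)
    (hM : ∀ g : G, ρ g * M = M * ρ g)
    (V : FDRep ℂ G) [Simple V]
    (P : Matrix (Fin N) (Fin N) ℂ)
    (hP : P = ((Module.finrank ℂ V : ℂ) / (Fintype.card G : ℂ)) •
        ∑ g : G, V.character g⁻¹ • ρ g) :
    P * P = P ∧ M * P = P * M ∧
    ∃ (hinv : ∀ x ∈ LinearMap.range P.mulVecLin,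
        M.mulVecLin x ∈ LinearMap.range P.mulVecLin)
      (p : Polynomial ℂ), p.Monic ∧
        LinearMap.charpoly (M.mulVecLin.restrict hinv) = p ^ (Module.finrank ℂ V) := by
  let σ : Representation ℂ G (Fin N → ℂ) := toLinAlgEquiv'.toMonoidHom.comp ρ
  have hσP : toLinAlgEquiv' P = Representation.isotypicProj V σ := by
    simp [hP, Representation.isotypicProj, σ]
  have hσM : ∀ g, Commute (toLinAlgEquiv' M) (σ g) := fun g =>
    (Commute.map (hM g : Commute (ρ g) M) toLinAlgEquiv').symm
  have hMP := Representation.commute_isotypicProj_of_forall_commute V σ hσM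
  refine ⟨toLinAlgEquiv'.injective ?_, toLinAlgEquiv'.injective ?_, ?_⟩
  · rw [map_mul, hσP]
    exact Representation.isotypicProj_isIdempotentElem V σ
  · rw [map_mul, map_mul, hσP]
    exact hMP.eq
  rw [show P.mulVecLin = Representation.isotypicProj V σ from hσP]
  exact ⟨fun x hx => Module.End.mapsTo_range_of_comm hMP hx,
    Representation.exists_monic_charpoly_restrict_eq_pow V σ hσM _⟩
end

section
/- Let G be a finite group acting linearly on ℝ^d through a group homomorphism g ↦ O_g into the orthogonal group O(d), let φ : G → {±1} be a group homomorphism, and let z : G × G → ℂ be a function with |z(g,h)| = 1 for all g,h. Suppose that for each g ∈ G we are given a continuous map U_g : ℝ^d → U(n) into the n×n unitary matrices such that U_g(O_h k)·U_h(k)^{φ_g} = z(g,h)·U_{gh}(k) for all g,h ∈ G and all k ∈ ℝ^d, where A^{φ_g} = A if φ_g = +1 and A^{φ_g} = conj(A) (the entrywise complex conjugate) if φ_g = -1. Then there exists a continuous map V : ℝ^d → U(n) such that U_g(k)·V(k)^{φ_g} = V(O_g k)·U_g(0) for all g ∈ G and all k ∈ ℝ^d. -/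
/-!
Let `clamp R` be the radial retraction onto the ball of radius `R`; the operators
`U_g (clamp R k)` are constant `U_g 0` at `R = 0` and equal `U_g k` for `‖k‖ ≤ R`. For radii
`b ≤ a` so close that each `U_h (clamp a x)` is within `1/4` of `U_h (clamp b x)`, the group average
`N k = 𝔼 h, U_h (clamp a (O_h⁻¹ k)) * (U_h (clamp b (O_h⁻¹ k)))⋆` is within `1/4` of `1`, and
the cocycle relation (the phases cancel in `A B⋆`) makes it intertwine the operators clamped at `a`
with those clamped at `b`. Its unitary polar part `N (N⋆N)^(-1/2)`, defined by the binomial series,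
commutes with unitary conjugation and entrywise conjugation, so it intertwines as well, and it is
`1` on the ball of radius `b`. Uniform continuity on balls lets finitely many such steps go from
radius `j` down to `0`; the gauges so obtained for `j = 0, 1, 2, …` agree on the ball of radius
`j`, and their limit is the canonical gauge.
-/

open Matrix

open Finset

open scoped BigOperators

namespace CanonicalGauge

section Clamp

variable {E : Type*} [NormedAddCommGroup E] [NormedSpace ℝ E]

noncomputable def clamp (R : ℝ) (k : E) : E := (R / max R ‖k‖) • k

lemma clamp_zero_left (k : E) : clamp 0 k = 0 := by simp [clamp]

lemma clamp_of_norm_le {R : ℝ} {k : E} (hk : ‖k‖ ≤ R) : clamp R k = k := by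
  rcases ((norm_nonneg k).trans hk).eq_or_lt with rfl | hR
  · rw [norm_le_zero_iff.1 hk, clamp_zero_left]
  · rw [clamp, max_eq_left hk, div_self hR.ne', one_smul]

lemma div_max_mul_eq_min {R t : ℝ} (hR : 0 ≤ R) (ht : 0 ≤ t) : R / max R t * t = min R t := by
  rw [div_mul_eq_mul_div, ← min_mul_max]
  rcases eq_or_ne (max R t) 0 with h | h
  · rw [h, div_zero, le_antisymm (h ▸ min_le_max) (le_min hR ht)]
  · exact mul_div_cancel_right₀ _ h

lemma norm_clamp_le {R : ℝ} (hR : 0 ≤ R) (k : E) : ‖clamp R k‖ ≤ R := by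
  rw [clamp, norm_smul, Real.norm_of_nonneg (div_nonneg hR (hR.trans (le_max_left _ _))),
    div_max_mul_eq_min hR (norm_nonneg k)]
  exact min_le_left _ _

lemma norm_clamp_sub_clamp_le {a b : ℝ} (ha : 0 ≤ a) (hb : 0 ≤ b) (k : E) :
    ‖clamp a k - clamp b k‖ ≤ |a - b| := by
  rw [clamp, clamp, ← sub_smul, norm_smul, Real.norm_eq_abs, ← abs_norm, ← abs_mul, sub_mul,
    abs_norm, div_max_mul_eq_min ha (norm_nonneg k), div_max_mul_eq_min hb (norm_nonneg k)]
  simpa using abs_min_sub_min_le_max a ‖k‖ b ‖k‖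

lemma clamp_map (R : ℝ) (f : E ≃ₗᵢ[ℝ] E) (k : E) : clamp R (f k) = f (clamp R k) := by
  rw [clamp, clamp, f.norm_map, map_smul]

lemma continuous_clamp {R : ℝ} (hR : 0 ≤ R) : Continuous (clamp (E := E) R) := by
  rcases hR.eq_or_lt with rfl | hR
  · simp only [funext clamp_zero_left, continuous_const]
  · exact (continuous_const.div (continuous_const.max continuous_norm)
      fun k => (hR.trans_le (le_max_left _ _)).ne').smul continuous_id

end Clamp

/-- The Taylor coefficients of `(1 - x) ^ (-1/2)`. -/
noncomputable def invSqrtCoeff (m : ℕ) : ℝ := Ring.multichoose (1 / 2 : ℝ) m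

lemma invSqrtCoeff_zero : invSqrtCoeff 0 = 1 := Ring.multichoose_zero_right _

lemma invSqrtCoeff_pos (m : ℕ) : 0 < invSqrtCoeff m := by
  have h := Ring.factorial_nsmul_multichoose_eq_ascPochhammer (1 / 2 : ℝ) m
  rw [Polynomial.ascPochhammer_smeval_eq_eval, nsmul_eq_mul] at h
  refine pos_of_mul_pos_right ?_ (Nat.cast_nonneg m.factorial)
  rw [invSqrtCoeff, h]
  exact ascPochhammer_pos m _ one_half_pos

/-- Chu–Vandermonde for `Ring.choose (-1/2)`, as `invSqrtCoeff m = (-1) ^ m * Ring.choose (-1/2) m`.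
-/
lemma sum_antidiagonal_invSqrtCoeff_mul (N : ℕ) :
    ∑ ij ∈ antidiagonal N, invSqrtCoeff ij.1 * invSqrtCoeff ij.2 = 1 := by
  have h := Ring.add_choose_eq N (Commute.all (-(1 / 2) : ℝ) (-(1 / 2)))
  rw [show (-(1 / 2) + -(1 / 2) : ℝ) = -1 by norm_num] at h
  simp only [Ring.choose_neg', Ring.multichoose_one] at h
  rw [sum_congr rfl fun ij hij => by
    rw [smul_mul_smul_comm, ← Int.negOnePow_add, ← Nat.cast_add, mem_antidiagonal.1 hij],
    ← smul_sum, smul_left_cancel_iff] at h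
  exact h.symm

lemma abs_invSqrtCoeff_le_one (m : ℕ) : |invSqrtCoeff m| ≤ 1 := by
  have hle := single_le_sum (f := fun ij : ℕ × ℕ => invSqrtCoeff ij.1 * invSqrtCoeff ij.2)
    (fun ij _ => (mul_pos (invSqrtCoeff_pos _) (invSqrtCoeff_pos _)).le)
    (by simp : ((0, m) : ℕ × ℕ) ∈ antidiagonal m)
  rw [sum_antidiagonal_invSqrtCoeff_mul, invSqrtCoeff_zero, one_mul] at hle
  rwa [abs_of_pos (invSqrtCoeff_pos m)]

lemma norm_pow_le_of_cstarRing {A : Type*} [NormedRing A] [StarRing A] [CStarRing A] (x : A)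
    (m : ℕ) : ‖x ^ m‖ ≤ ‖x‖ ^ m := by
  rcases subsingleton_or_nontrivial A with hA | hA
  · simp [Subsingleton.elim (x ^ m) 0]
  · exact norm_pow_le x m

section InvSqrt

variable {A : Type*} [NormedRing A] [NormedAlgebra ℝ A]

noncomputable def invSqrtOneSub (x : A) : A := ∑' m, invSqrtCoeff m • x ^ m

lemma norm_invSqrtCoeff_smul_le (m : ℕ) (x : A) : ‖invSqrtCoeff m • x‖ ≤ ‖x‖ :=
  (norm_smul_le _ _).trans (mul_le_of_le_one_left (norm_nonneg _) (abs_invSqrtCoeff_le_one m))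

lemma summable_norm_invSqrtCoeff_smul_pow {x : A} (hx : ‖x‖ < 1) :
    Summable fun m => ‖invSqrtCoeff m • x ^ m‖ :=
  (summable_norm_geometric_of_norm_lt_one hx).of_nonneg_of_le (fun _ => norm_nonneg _)
    fun m => norm_invSqrtCoeff_smul_le m _

lemma invSqrtOneSub_zero : invSqrtOneSub (0 : A) = 1 := by
  rw [invSqrtOneSub, tsum_eq_single 0 fun m hm => by rw [zero_pow hm, smul_zero], pow_zero,
    invSqrtCoeff_zero, one_smul]

lemma commute_invSqrtOneSub (x : A) : Commute x (invSqrtOneSub x) :=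
  Commute.tsum_right x fun m => ((Commute.refl x).pow_right m).smul_right _

lemma map_invSqrtOneSub {B F : Type*} [NormedRing B] [NormedAlgebra ℝ B] [FunLike F A B]
    [AlgHomClass F ℝ A B] (f : F) (hf : Continuous f) {x : A}
    (hx : Summable fun m => invSqrtCoeff m • x ^ m) :
    f (invSqrtOneSub x) = invSqrtOneSub (f x) := by
  simp only [invSqrtOneSub, (hx.hasSum.map f hf).tsum_eq.symm, Function.comp_def, map_smul,
    map_pow]

lemma star_invSqrtOneSub [StarRing A] [StarModule ℝ A] [ContinuousStar A] (x : A) :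
    star (invSqrtOneSub x) = invSqrtOneSub (star x) := by
  simp only [invSqrtOneSub, tsum_star, star_smul, star_pow, star_trivial]

variable [CompleteSpace A]

lemma invSqrtOneSub_mul_self_mul {x : A} (hx : ‖x‖ < 1) :
    invSqrtOneSub x * invSqrtOneSub x * (1 - x) = 1 := by
  have hs := summable_norm_invSqrtCoeff_smul_pow hx
  suffices invSqrtOneSub x * invSqrtOneSub x = ∑' m, x ^ m by rw [this, geom_series_mul_neg x hx]
  rw [invSqrtOneSub, tsum_mul_tsum_eq_tsum_sum_antidiagonal_of_summable_norm hs hs]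
  congr 1 with N
  rw [sum_congr rfl fun ij hij => by
      rw [smul_mul_smul_comm, ← pow_add, mem_antidiagonal.1 hij], ← sum_smul,
    sum_antidiagonal_invSqrtCoeff_mul, one_smul]

lemma continuousOn_invSqrtOneSub [StarRing A] [CStarRing A] :
    ContinuousOn (invSqrtOneSub (A := A)) (Metric.ball 0 1) := by
  intro x hx
  obtain ⟨r, hxr, hr⟩ := exists_between (mem_ball_zero_iff.1 hx)
  have hcont : ContinuousOn (invSqrtOneSub (A := A)) (Metric.ball 0 r) :=
    continuousOn_tsum (fun m => (continuous_pow m).continuousOn.const_smul _)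
      (summable_geometric_of_lt_one ((norm_nonneg x).trans hxr.le) hr) fun m y hy =>
      (norm_invSqrtCoeff_smul_le m _).trans <| (norm_pow_le_of_cstarRing y m).trans <|
        pow_le_pow_left₀ (norm_nonneg y) (mem_ball_zero_iff.1 hy).le m
  exact (hcont.continuousAt (Metric.isOpen_ball.mem_nhds (mem_ball_zero_iff.2 hxr)))
    |>.continuousWithinAt

end InvSqrt

lemma norm_one_sub_star_mul_self_le {A : Type*} [NormedRing A] [StarRing A] [NormedStarGroup A]
    {N : A} (h : ‖N - 1‖ ≤ 1 / 4) :
    ‖1 - star N * N‖ ≤ 9 / 16 := by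
  have hstar : ‖star N - 1‖ = ‖N - 1‖ := by rw [← norm_star (N - 1), star_sub, star_one]
  have hsplit : 1 - star N * N = -((star N - 1) * (N - 1) + (N - 1) + (star N - 1)) := by
    noncomm_ring
  rw [hsplit, norm_neg]
  calc ‖(star N - 1) * (N - 1) + (N - 1) + (star N - 1)‖
      ≤ ‖star N - 1‖ * ‖N - 1‖ + ‖N - 1‖ + ‖star N - 1‖ :=
        (norm_add₃_le).trans (by gcongr; exact norm_mul_le _ _)
    _ ≤ 1 / 4 * (1 / 4) + 1 / 4 + 1 / 4 := by rw [hstar]; gcongr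
    _ = 9 / 16 := by norm_num

section PolarPart

variable {A : Type*} [NormedRing A] [StarRing A] [NormedAlgebra ℝ A]

/-- The unitary factor `N (N⋆N)^(-1/2)` of the polar decomposition of `N`, for `N⋆N` near `1`. -/
noncomputable def polarPart (N : A) : A := N * invSqrtOneSub (1 - star N * N)

lemma polarPart_one : polarPart (1 : A) = 1 := by
  rw [polarPart, star_one, mul_one, sub_self, invSqrtOneSub_zero, one_mul]

lemma polarPart_unitary_mul {u : A} (hu : u ∈ unitary A) (N : A) :
    polarPart (u * N) = u * polarPart N := by
  rw [polarPart, polarPart, star_mul, mul_assoc (star N), ← mul_assoc (star u),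
    Unitary.star_mul_self_of_mem hu, one_mul, mul_assoc]

variable [CompleteSpace A]

lemma map_polarPart {B F : Type*} [NormedRing B] [StarRing B] [NormedAlgebra ℝ B]
    [FunLike F A B] [AlgHomClass F ℝ A B] [StarHomClass F A B] (f : F) (hf : Continuous f) {N : A}
    (hN : ‖1 - star N * N‖ < 1) : f (polarPart N) = polarPart (f N) := by
  rw [polarPart, polarPart, map_mul,
    map_invSqrtOneSub f hf (summable_norm_invSqrtCoeff_smul_pow hN).of_norm, map_sub, map_one,
    map_mul, map_star]

lemma polarPart_mul_map_mul_star {F : Type*} [FunLike F A A] [AlgHomClass F ℝ A A]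
    [StarHomClass F A A] (f : F) (hf : Continuous f) {u w : A} (hu : u ∈ unitary A)
    (hw : w ∈ unitary A) {N : A} (hN : ‖1 - star N * N‖ < 1) :
    polarPart (u * f N * star w) = u * f (polarPart N) * star w := by
  let c : A →⋆ₐ[ℝ] A := (Unitary.conjStarAlgAut ℝ A ⟨w, hw⟩ : A →⋆ₐ[ℝ] A).comp f
  have hc : Continuous c := ((continuous_const.mul hf).mul continuous_const)
  have hw' : star w * w = 1 := Unitary.star_mul_self_of_mem hw
  calc polarPart (u * f N * star w) = polarPart (u * star w * c N) := by
        simp [c, mul_assoc, ← mul_assoc (star w), hw']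
    _ = u * star w * c (polarPart N) := by
        rw [polarPart_unitary_mul (mul_mem hu (Unitary.star_mem hw)), map_polarPart c hc hN]
    _ = u * f (polarPart N) * star w := by
        simp [c, mul_assoc, ← mul_assoc (star w), hw']

lemma continuousOn_polarPart [CStarRing A] :
    ContinuousOn (polarPart (A := A)) {N | ‖1 - star N * N‖ < 1} :=
  continuousOn_id.mul <| continuousOn_invSqrtOneSub.comp
    (continuous_const.sub (continuous_star.mul continuous_id)).continuousOn
    fun _ hN => mem_ball_zero_iff.2 hN

variable [StarModule ℝ A] [ContinuousStar A]

lemma star_polarPart_mul_self {N : A} (hN : ‖1 - star N * N‖ < 1) :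
    star (polarPart N) * polarPart N = 1 := by
  set X := 1 - star N * N
  set S := invSqrtOneSub X
  have hS : star S = S := by
    rw [star_invSqrtOneSub, show star X = X by simp [X, star_sub]]
  have hNN : star N * N = 1 - X := by simp [X]
  calc star (polarPart N) * polarPart N = S * (star N * N) * S := by
        rw [show polarPart N = N * S from rfl, star_mul, hS]; noncomm_ring
    _ = S * S * (1 - X) := by
        rw [hNN, mul_assoc, mul_assoc, ((Commute.one_left S).sub_left (commute_invSqrtOneSub X)).eq]
    _ = 1 := invSqrtOneSub_mul_self_mul hN

end PolarPart

section MatrixAlgebra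

variable {m : Type*} [Fintype m] [DecidableEq m]

open scoped Matrix.Norms.L2Operator

lemma polarPart_mem_unitary {N : Matrix m m ℂ} (hN : ‖1 - star N * N‖ < 1) :
    polarPart N ∈ unitary (Matrix m m ℂ) :=
  Matrix.mem_unitaryGroup_iff'.2 (star_polarPart_mul_self hN)

noncomputable def conjMatrix : Matrix m m ℂ ≃⋆ₐ[ℝ] Matrix m m ℂ :=
  StarAlgEquiv.ofAlgEquiv Complex.conjAe.mapMatrix fun _ =>
    (Matrix.conjTranspose_map _ fun _ => rfl).symm

noncomputable def twist (e : ℤˣ) : Matrix m m ℂ ≃⋆ₐ[ℝ] Matrix m m ℂ :=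
  if e = 1 then StarAlgEquiv.refl ℝ _ else conjMatrix

lemma twist_apply (e : ℤˣ) (A : Matrix m m ℂ) :
    twist e A = if e = 1 then A else A.map (starRingEnd ℂ) := by
  unfold twist; split_ifs <;> rfl

lemma continuous_twist (e : ℤˣ) : Continuous (twist e : Matrix m m ℂ → Matrix m m ℂ) := by
  unfold twist; split_ifs
  · exact continuous_id
  · exact (continuous_id (X := Matrix m m ℂ)).matrix_map Complex.continuous_conj

lemma twist_expect (e : ℤˣ) {ι : Type*} (s : Finset ι) (f : ι → Matrix m m ℂ) :
    twist e (𝔼 i ∈ s, f i) = 𝔼 i ∈ s, twist e (f i) := by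
  simp only [Finset.expect, map_nnrat_smul, map_sum]

end MatrixAlgebra

lemma norm_expect_le {ι M : Type*} [SeminormedAddCommGroup M] [NormedSpace ℝ M] [Module ℚ≥0 M]
    [IsScalarTower ℚ≥0 ℝ M] (s : Finset ι) (f : ι → M) : ‖𝔼 i ∈ s, f i‖ ≤ 𝔼 i ∈ s, ‖f i‖ :=
  le_expect_of_subadditive norm_zero norm_add_le fun n x => by
    rw [← NNRat.cast_smul_eq_nnqsmul ℝ, norm_smul, ← NNRat.cast_smul_eq_nnqsmul ℝ, smul_eq_mul,
      Real.norm_of_nonneg (by positivity)]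

lemma apply_eq_of_le_of_norm_le {E X : Type*} [SeminormedAddGroup E] {F : ℕ → E → X}
    (hF : ∀ (j : ℕ) k, ‖k‖ ≤ j → F (j + 1) k = F j k) {j j' : ℕ} (hjj' : j ≤ j') {k : E}
    (hk : ‖k‖ ≤ j) : F j' k = F j k := by
  induction j', hjj' using Nat.le_induction with
  | base => rfl
  | succ j' hjj' ih => rw [hF j' k (hk.trans (by exact_mod_cast hjj')), ih]

lemma continuous_apply_ceil_norm {E X : Type*} [SeminormedAddGroup E] [TopologicalSpace X]
    {F : ℕ → E → X} (hcont : ∀ j, Continuous (F j))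
    (hF : ∀ (j : ℕ) k, ‖k‖ ≤ j → F (j + 1) k = F j k) :
    Continuous fun k => F ⌈‖k‖⌉₊ k := by
  refine continuous_iff_continuousAt.2 fun k₀ => ?_
  have hk₀ : ‖k₀‖ < (⌈‖k₀‖⌉₊ + 1 : ℕ) := by push_cast; linarith [Nat.le_ceil ‖k₀‖]
  refine (hcont (⌈‖k₀‖⌉₊ + 1)).continuousAt.congr ?_
  filter_upwards [(isOpen_lt continuous_norm continuous_const).mem_nhds hk₀] with k hk
  exact apply_eq_of_le_of_norm_le hF (Nat.ceil_le.2 (le_of_lt hk)) (Nat.le_ceil _)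

lemma exists_pos_forall_norm_sub_le {ι E F : Type*} [Finite ι] [NormedAddCommGroup E]
    [ProperSpace E] [SeminormedAddCommGroup F] {f : ι → E → F} (hf : ∀ i, Continuous (f i))
    (c : ℝ) {ε : ℝ} (hε : 0 < ε) :
    ∃ δ > 0, ∀ i x y, ‖x‖ ≤ c → ‖y‖ ≤ c → ‖x - y‖ ≤ δ → ‖f i x - f i y‖ ≤ ε := by
  have := Fintype.ofFinite ι
  have huc := (isCompact_closedBall (0 : E) c).uniformContinuousOn_of_continuous
    (continuous_pi hf).continuousOn
  obtain ⟨δ, hδ, hclose⟩ := Metric.uniformContinuousOn_iff_le.1 huc ε hε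
  refine ⟨δ, hδ, fun i x y hx hy hxy => ?_⟩
  rw [← dist_eq_norm] at hxy ⊢
  exact (dist_le_pi_dist _ _ i).trans
    (hclose x (mem_closedBall_zero_iff.2 hx) y (mem_closedBall_zero_iff.2 hy) hxy)

section Gauge

open scoped Matrix.Norms.L2Operator

variable {G E m : Type*} [Group G] [NormedAddCommGroup E] [NormedSpace ℝ E] [Fintype m]
  [DecidableEq m] (ρ : G →* (E ≃ₗᵢ[ℝ] E)) (φ : G →* ℤˣ) (U : G → E → Matrix m m ℂ)

lemma map_mul_apply (g h : G) (k : E) : ρ (g * h) k = ρ g (ρ h k) := by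
  rw [map_mul, LinearIsometryEquiv.coe_mul, Function.comp_apply]

structure IsProjectiveSymmetry : Prop where
  mem_unitary : ∀ g k, U g k ∈ unitary (Matrix m m ℂ)
  exists_cocycle : ∃ z : G → G → ℂ, (∀ g h, ‖z g h‖ = 1) ∧
    ∀ g h k, U g (ρ h k) * twist (φ g) (U h k) = z g h • U (g * h) k

variable {ρ φ U}

lemma IsProjectiveSymmetry.mul_twist_mul_star (hU : IsProjectiveSymmetry ρ φ U) (g h : G)
    (x y : E) : U g (ρ h x) * twist (φ g) (U h x * star (U h y)) =
      U (g * h) x * star (U (g * h) y) * U g (ρ h y) := by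
  obtain ⟨z, hz, hcoc⟩ := hU.exists_cocycle
  have hy : twist (φ g) (U h y) = star (U g (ρ h y)) * (z g h • U (g * h) y) := by
    rw [← hcoc, ← mul_assoc, Unitary.star_mul_self_of_mem (hU.mem_unitary _ _), one_mul]
  have hzz : star (z g h) * z g h = 1 := by
    rw [Complex.star_def, mul_comm, Complex.mul_conj', hz]; norm_num
  rw [map_mul, map_star, hy, ← mul_assoc, hcoc, star_mul, star_smul, star_star]
  simp only [smul_mul_assoc, mul_smul_comm, smul_smul, hzz, one_smul, mul_assoc]

variable [Fintype G]

variable (ρ U) in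
noncomputable def transition (a b : ℝ) (k : E) : Matrix m m ℂ :=
  𝔼 h, U h (clamp a (ρ h⁻¹ k)) * star (U h (clamp b (ρ h⁻¹ k)))

lemma IsProjectiveSymmetry.mul_twist_transition (hU : IsProjectiveSymmetry ρ φ U) (a b : ℝ)
    (g : G) (k : E) : U g (clamp a k) * twist (φ g) (transition ρ U a b k) =
      transition ρ U a b (ρ g k) * U g (clamp b k) := by
  have hterm : ∀ h, U g (clamp a k) *
      twist (φ g) (U h (clamp a (ρ h⁻¹ k)) * star (U h (clamp b (ρ h⁻¹ k)))) =
        U (g * h) (clamp a (ρ (g * h)⁻¹ (ρ g k))) * star (U (g * h) (clamp b (ρ (g * h)⁻¹ (ρ g k))))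
          * U g (clamp b k) := by
    intro h
    have hclamp : ∀ R, clamp R k = ρ h (clamp R (ρ h⁻¹ k)) := fun R => by
      rw [← clamp_map, ← map_mul_apply, mul_inv_cancel, map_one]; rfl
    rw [← map_mul_apply, _root_.mul_inv_rev, inv_mul_cancel_right, hclamp a, hclamp b]
    exact hU.mul_twist_mul_star g h _ _
  simp only [transition, twist_expect, Finset.mul_expect, Finset.expect_mul, hterm]
  exact Fintype.expect_equiv (Equiv.mulLeft g) _ _ fun _ => rfl

lemma IsProjectiveSymmetry.norm_transition_sub_one_le (hU : IsProjectiveSymmetry ρ φ U)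
    {a b : ℝ} (hstep : ∀ h x, ‖U h (clamp a x) - U h (clamp b x)‖ ≤ 1 / 4) (k : E) :
    ‖transition ρ U a b k - 1‖ ≤ 1 / 4 := by
  have hterm : ∀ h x, ‖U h (clamp a x) * star (U h (clamp b x)) - 1‖ ≤ 1 / 4 := fun h x => by
    rw [← Unitary.mul_star_self_of_mem (hU.mem_unitary h (clamp b x)), ← sub_mul,
      CStarRing.norm_mul_mem_unitary _ (Unitary.star_mem (hU.mem_unitary h _))]
    exact hstep h x
  rw [transition, ← Fintype.expect_const (ι := G) (1 : Matrix m m ℂ), ← Finset.expect_sub_distrib]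
  exact (norm_expect_le _ _).trans (expect_le univ_nonempty fun h _ => hterm h _)

lemma IsProjectiveSymmetry.transition_of_norm_le (hU : IsProjectiveSymmetry ρ φ U) {a b : ℝ}
    (hba : b ≤ a) {k : E} (hk : ‖k‖ ≤ b) : transition ρ U a b k = 1 := by
  have hk' : ‖k‖ ≤ a := hk.trans hba
  rw [transition]
  simp_rw [clamp_of_norm_le ((ρ _).norm_map k ▸ hk),
    clamp_of_norm_le ((ρ _).norm_map k ▸ hk'), Unitary.mul_star_self_of_mem (hU.mem_unitary _ _),
    Fintype.expect_const]

omit [DecidableEq m] in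
lemma continuous_transition (hUc : ∀ g, Continuous (U g)) {a b : ℝ} (ha : 0 ≤ a) (hb : 0 ≤ b) :
    Continuous (transition ρ U a b) := by
  have hcomp : ∀ h {R : ℝ}, 0 ≤ R → Continuous fun k => U h (clamp R (ρ h⁻¹ k)) :=
    fun h _ hR => (hUc h).comp ((continuous_clamp hR).comp (ρ h⁻¹).continuous)
  unfold transition Finset.expect
  exact (continuous_finsetSum _ fun h _ => (hcomp h ha).mul (hcomp h hb).star).const_smul (_ : ℚ≥0)

variable (ρ φ U) in
structure IsClampGauge (a b : ℝ) (V : E → Matrix m m ℂ) : Prop where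
  continuous : Continuous V
  mem_unitary : ∀ k, V k ∈ unitary (Matrix m m ℂ)
  eq_one_of_norm_le : ∀ k, ‖k‖ ≤ b → V k = 1
  intertwines : ∀ g k, U g (clamp a k) * twist (φ g) (V k) = V (ρ g k) * U g (clamp b k)

omit [Fintype G] in
lemma IsClampGauge.refl (a : ℝ) : IsClampGauge ρ φ U a a 1 :=
  ⟨continuous_const, fun _ => one_mem _, fun _ _ => rfl, fun g k => by simp⟩

omit [Fintype G] in
lemma IsClampGauge.mul {a b c : ℝ} {V₁ V₂ : E → Matrix m m ℂ} (h₁ : IsClampGauge ρ φ U c b V₁)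
    (h₂ : IsClampGauge ρ φ U b a V₂) (hab : a ≤ b) : IsClampGauge ρ φ U c a (V₁ * V₂) where
  continuous := h₁.continuous.mul h₂.continuous
  mem_unitary k := mul_mem (h₁.mem_unitary k) (h₂.mem_unitary k)
  eq_one_of_norm_le k hk := by
    rw [Pi.mul_apply, h₁.eq_one_of_norm_le k (hk.trans hab), h₂.eq_one_of_norm_le k hk, one_mul]
  intertwines g k := by
    rw [Pi.mul_apply, Pi.mul_apply, map_mul, ← mul_assoc, h₁.intertwines, mul_assoc,
      h₂.intertwines, mul_assoc]

lemma IsProjectiveSymmetry.exists_isClampGauge_of_step (hU : IsProjectiveSymmetry ρ φ U)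
    (hUc : ∀ g, Continuous (U g)) {a b : ℝ} (hb : 0 ≤ b) (hba : b ≤ a)
    (hstep : ∀ h x, ‖U h (clamp a x) - U h (clamp b x)‖ ≤ 1 / 4) :
    ∃ V, IsClampGauge ρ φ U a b V := by
  have hT : ∀ k, ‖1 - star (transition ρ U a b k) * transition ρ U a b k‖ < 1 := fun k =>
    (norm_one_sub_star_mul_self_le (hU.norm_transition_sub_one_le hstep k)).trans_lt (by norm_num)
  refine ⟨fun k => polarPart (transition ρ U a b k),
    continuousOn_polarPart.comp_continuous (continuous_transition hUc (hb.trans hba) hb) hT,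
    fun k => polarPart_mem_unitary (hT k),
    fun k hk => by rw [hU.transition_of_norm_le hba hk, polarPart_one], fun g k => ?_⟩
  have hu := hU.mem_unitary g (clamp a k)
  have hw := hU.mem_unitary g (clamp b k)
  have hgk : transition ρ U a b (ρ g k) =
      U g (clamp a k) * twist (φ g) (transition ρ U a b k) * star (U g (clamp b k)) := by
    rw [hU.mul_twist_transition, mul_assoc, Unitary.mul_star_self_of_mem hw, mul_one]
  rw [hgk, polarPart_mul_map_mul_star _ (continuous_twist _) hu hw (hT k), mul_assoc _ (star _),
    Unitary.star_mul_self_of_mem hw, mul_one]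

lemma IsProjectiveSymmetry.exists_isClampGauge [ProperSpace E] (hU : IsProjectiveSymmetry ρ φ U)
    (hUc : ∀ g, Continuous (U g)) {b c : ℝ} (hb : 0 ≤ b) (hbc : b ≤ c) :
    ∃ V, IsClampGauge ρ φ U c b V := by
  obtain ⟨η, hη, hclose⟩ := exists_pos_forall_norm_sub_le hUc c (by norm_num : (0 : ℝ) < 1 / 4)
  obtain ⟨N, hN⟩ := exists_nat_ge ((c - b) / η)
  rw [div_le_iff₀ hη] at hN
  induction N generalizing b with
  | zero =>
    obtain rfl : b = c := le_antisymm hbc (by simpa using hN)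
    exact ⟨1, .refl b⟩
  | succ N ih =>
    set b' := min c (b + η)
    have hbb' : b ≤ b' := le_min hbc (by linarith)
    have hb' : 0 ≤ b' := hb.trans hbb'
    have hrest : c - b' ≤ N * η := by
      rw [sub_le_comm]
      refine le_min (sub_le_self _ (by positivity)) ?_
      push_cast at hN
      linarith
    have hstep : ∀ h x, ‖U h (clamp b' x) - U h (clamp b x)‖ ≤ 1 / 4 := fun h x =>
      hclose h _ _ ((norm_clamp_le hb' x).trans (min_le_left _ _)) ((norm_clamp_le hb x).trans hbc)
        <| (norm_clamp_sub_clamp_le hb' hb x).trans <| by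
          rw [abs_of_nonneg (sub_nonneg.2 hbb')]; linarith [min_le_right c (b + η)]
    obtain ⟨V₁, hV₁⟩ := ih hb' (min_le_left _ _) hrest
    obtain ⟨V₂, hV₂⟩ := hU.exists_isClampGauge_of_step hUc hb hbb' hstep
    exact ⟨V₁ * V₂, hV₁.mul hV₂ hbb'⟩

theorem IsProjectiveSymmetry.exists_canonical_gauge [ProperSpace E]
    (hU : IsProjectiveSymmetry ρ φ U) (hUc : ∀ g, Continuous (U g)) :
    ∃ V : E → Matrix m m ℂ, Continuous V ∧ (∀ k, V k ∈ unitary (Matrix m m ℂ)) ∧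
      ∀ g k, U g k * twist (φ g) (V k) = V (ρ g k) * U g 0 := by
  choose W hW using fun j : ℕ =>
    hU.exists_isClampGauge hUc j.cast_nonneg (le_add_of_nonneg_right zero_le_one)
  let V : ℕ → E → Matrix m m ℂ := fun j => Nat.rec 1 (fun j Vj => W j * Vj) j
  have hV : ∀ j : ℕ, IsClampGauge ρ φ U j 0 (V j) := by
    intro j
    induction j with
    | zero => exact_mod_cast IsClampGauge.refl (ρ := ρ) (φ := φ) (U := U) 0
    | succ j ih => exact_mod_cast (hW j).mul ih j.cast_nonneg
  have hstab : ∀ (j : ℕ) k, ‖k‖ ≤ j → V (j + 1) k = V j k := fun j k hk => by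
    simp [V, (hW j).eq_one_of_norm_le k hk]
  refine ⟨fun k => V ⌈‖k‖⌉₊ k, continuous_apply_ceil_norm (fun j => (hV j).continuous) hstab,
    fun k => (hV _).mem_unitary k, fun g k => ?_⟩
  have := (hV ⌈‖k‖⌉₊).intertwines g k
  rw [clamp_of_norm_le (Nat.le_ceil _), clamp_zero_left] at this
  simpa only [LinearIsometryEquiv.norm_map] using this

end Gauge

noncomputable def orthogonalGroupToIsometry (ι : Type*) [Fintype ι] [DecidableEq ι] :
    orthogonalGroup ι ℝ →* (EuclideanSpace ℝ ι ≃ₗᵢ[ℝ] EuclideanSpace ℝ ι) :=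
  Unitary.linearIsometryEquiv.toMonoidHom.comp
    (Unitary.map (StarMonoidHom.ofClass (Matrix.toEuclideanCLM (𝕜 := ℝ) (n := ι)))).toMonoidHom

lemma orthogonalGroupToIsometry_apply {ι : Type*} [Fintype ι] [DecidableEq ι]
    (A : orthogonalGroup ι ℝ) (x : EuclideanSpace ℝ ι) :
    orthogonalGroupToIsometry ι A x = WithLp.toLp 2 ((A : Matrix ι ι ℝ) *ᵥ x.ofLp) :=
  Matrix.toEuclideanCLM_toLp (A : Matrix ι ι ℝ) x.ofLp

end CanonicalGauge

open CanonicalGauge in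
/-- **Existence of a canonical gauge (Theorem 1 of the paper).**
Let a finite group `G` act linearly on `ℝ^d` through a homomorphism into the orthogonal
group, let `φ : G → {±1}` be a homomorphism (unitary/antiunitary grading) and
`z : G × G → U(1)` a factor system.  Given a continuous family of projective (possibly
antiunitary) symmetry operators `U_g(k)` satisfying
`U_g(O_h k) ⬝ U_h(k)^{φ_g} = z(g,h) ⬝ U_{gh}(k)`, there exists a continuous family of
unitaries `V(k)` such that `U_g(k) ⬝ V(k)^{φ_g} = V(O_g k) ⬝ U_g(0)` for all `g, k`;
i.e. the gauge `V` makes the symmetry operators constant, equal to their value at the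
fixed point `0`. -/
theorem exists_canonical_gauge (d n : ℕ) (G : Type) [Group G] [Fintype G]
    (O : G →* Matrix.orthogonalGroup (Fin d) ℝ)
    (φ : G →* ℤˣ)
    (z : G → G → ℂ) (hz : ∀ g h : G, ‖z g h‖ = 1)
    (U : G → (Fin d → ℝ) → Matrix (Fin n) (Fin n) ℂ)
    (hUcont : ∀ g : G, Continuous (U g))
    (hUunitary : ∀ (g : G) (k : Fin d → ℝ), U g k ∈ Matrix.unitaryGroup (Fin n) ℂ)
    (hcocycle : ∀ (g h : G) (k : Fin d → ℝ),
      U g (((O h : Matrix (Fin d) (Fin d) ℝ)).mulVec k) *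
          (if φ g = 1 then U h k else (U h k).map (starRingEnd ℂ))
        = z g h • U (g * h) k) :
    ∃ V : (Fin d → ℝ) → Matrix (Fin n) (Fin n) ℂ,
      Continuous V ∧
      (∀ k : Fin d → ℝ, V k ∈ Matrix.unitaryGroup (Fin n) ℂ) ∧
      ∀ (g : G) (k : Fin d → ℝ),
        U g k * (if φ g = 1 then V k else (V k).map (starRingEnd ℂ))
          = V (((O g : Matrix (Fin d) (Fin d) ℝ)).mulVec k) * U g 0 := by
  let ρ := (orthogonalGroupToIsometry (Fin d)).comp O
  have hρ : ∀ g x, ρ g x = WithLp.toLp 2 ((O g : Matrix (Fin d) (Fin d) ℝ) *ᵥ x.ofLp) :=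
    fun g x => orthogonalGroupToIsometry_apply (O g) x
  have hU : IsProjectiveSymmetry ρ φ fun g x => U g x.ofLp :=
    ⟨fun g x => hUunitary g _, z, hz, fun g h x => by
      simpa only [hρ, twist_apply, WithLp.ofLp_toLp] using hcocycle g h x.ofLp⟩
  obtain ⟨V, hVc, hVu, hV⟩ :=
    hU.exists_canonical_gauge fun g => (hUcont g).comp (PiLp.continuous_ofLp 2 _)
  refine ⟨fun k => V (WithLp.toLp 2 k), hVc.comp (PiLp.continuous_toLp 2 _), fun k => hVu _,
    fun g k => ?_⟩
  simpa only [hρ, twist_apply, WithLp.ofLp_toLp, WithLp.ofLp_zero] using hV g (WithLp.toLp 2 k)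
end

section
/- Let Φ : ℝ → Mat_{N×m}(ℂ) and U : ℝ → Mat_{N×N}(ℂ) be differentiable families of matrices such that for all t: Φ(t)†·Φ(t) = 1_m (orthonormal frames), U(t) is unitary, and U(t)·conj(Φ(t)) = Φ(t). Then for every t, 2·tr(Φ(t)†·Φ'(t)) = -tr( Φ(t)† · U(t) · (U†)'(t) · Φ(t) ), where (U†)'(t) denotes the derivative of t ↦ U(t)†. -/
/-!
Differentiate the three constraints `Φ†Φ = 1`, `UU† = 1` and `U conj Φ = Φ`. The last one
gives `Φ' = U' conj Φ + U conj Φ'`; multiply by `Φ†` and take traces. Since `Φ†U = Φᵀ`, the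
second term is `conj tr(Φ†Φ')`, which equals `-tr(Φ†Φ')` because `tr(Φ†Φ')` is imaginary by
the first constraint. Since `conj Φ = U†Φ` and `U'U† = -U(U†)'` by the second, the first term is
`-tr(Φ†U(U†)'Φ)`.
-/

open Matrix

namespace Matrix

variable {α m n : Type*} [CommRing α] [StarRing α] [Fintype n]

theorem trace_transpose_mul_map_star [Fintype m] (P Q : Matrix n m α) :
    (Pᵀ * Q.map (starRingEnd α)).trace = star (Pᴴ * Q).trace := by
  rw [← trace_conjTranspose, conjTranspose_mul, conjTranspose_conjTranspose, ← trace_transpose,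
    transpose_mul, transpose_transpose]
  rfl

theorem star_trace_conjTranspose_mul_eq_neg [Fintype m] {P P' : Matrix n m α}
    (h : P'ᴴ * P + Pᴴ * P' = 0) : star (Pᴴ * P').trace = -(Pᴴ * P').trace := by
  rw [← trace_conjTranspose, conjTranspose_mul, conjTranspose_conjTranspose, ← trace_neg,
    eq_neg_of_add_eq_zero_left h]

theorem map_star_eq_conjTranspose_mul [DecidableEq n] {V : Matrix n n α}
    (hV : V ∈ unitaryGroup n α) {P : Matrix n m α} (h : V * P.map (starRingEnd α) = P) :
    P.map (starRingEnd α) = Vᴴ * P := by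
  conv_rhs =>
    rw [← h, ← Matrix.mul_assoc, ← star_eq_conjTranspose, mem_unitaryGroup_iff'.mp hV,
      Matrix.one_mul]

theorem two_mul_trace_conjTranspose_mul_eq [Fintype m] [DecidableEq n] {P P' : Matrix n m α}
    {V W : Matrix n n α}
    (hV : V ∈ unitaryGroup n α) (hgauge : V * P.map (starRingEnd α) = P)
    (hortho' : P'ᴴ * P + Pᴴ * P' = 0) (hunitary' : Wᴴ * Vᴴ + V * W = 0)
    (hgauge' : Wᴴ * P.map (starRingEnd α) + V * P'.map (starRingEnd α) = P') :
    2 * (Pᴴ * P').trace = -(Pᴴ * V * W * P).trace := by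
  have hconj := map_star_eq_conjTranspose_mul hV hgauge
  have hPV : Pᴴ * V = Pᵀ := by
    rw [← conjTranspose_conjTranspose V, ← conjTranspose_mul, ← hconj]
    ext i j
    simp [conjTranspose_apply, starRingEnd_apply]
  have hWV : Wᴴ * Vᴴ = -(V * W) := eq_neg_of_add_eq_zero_left hunitary'
  have hfirst : (Pᴴ * (Wᴴ * P.map (starRingEnd α))).trace = -(Pᴴ * V * W * P).trace := by
    rw [hconj, ← Matrix.mul_assoc Wᴴ, hWV]
    simp only [Matrix.mul_neg, Matrix.neg_mul, trace_neg, Matrix.mul_assoc]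
  have hsecond : (Pᴴ * (V * P'.map (starRingEnd α))).trace = star (Pᴴ * P').trace := by
    rw [← Matrix.mul_assoc, hPV, trace_transpose_mul_map_star]
  have hsplit : (Pᴴ * P').trace = -(Pᴴ * V * W * P).trace + star (Pᴴ * P').trace := by
    conv_lhs => rw [← hgauge', Matrix.mul_add, trace_add, hfirst, hsecond]
  linear_combination hsplit + star_trace_conjTranspose_mul_eq_neg hortho'

end Matrix

section EntrywiseDeriv

variable {𝕜 l m n : Type*} [RCLike 𝕜]

/-- Matrices carry no canonical norm in Mathlib, so derivatives of matrix families are taken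
entry by entry, as in the hypotheses of `pt_berry_connection_identity`. -/
def HasEntrywiseDerivAt (A : ℝ → Matrix m n 𝕜) (A' : Matrix m n 𝕜) (t : ℝ) : Prop :=
  ∀ i j, HasDerivAt (fun s => A s i j) (A' i j) t

variable {A B : ℝ → Matrix m n 𝕜} {A' B' : Matrix m n 𝕜} {t : ℝ}

theorem hasEntrywiseDerivAt_const (C : Matrix m n 𝕜) (t : ℝ) :
    HasEntrywiseDerivAt (fun _ => C) 0 t :=
  fun i j => hasDerivAt_const t (C i j)

theorem HasEntrywiseDerivAt.unique_of_forall_eq (hA : HasEntrywiseDerivAt A A' t)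
    (hB : HasEntrywiseDerivAt B B' t) (h : ∀ s, A s = B s) : A' = B' := by
  obtain rfl : A = B := funext h
  exact Matrix.ext fun i j => (hA i j).unique (hB i j)

theorem HasEntrywiseDerivAt.conjTranspose (hA : HasEntrywiseDerivAt A A' t) :
    HasEntrywiseDerivAt (fun s => (A s)ᴴ) A'ᴴ t :=
  fun i j => (hA j i).star

theorem HasEntrywiseDerivAt.map_star (hA : HasEntrywiseDerivAt A A' t) :
    HasEntrywiseDerivAt (fun s => (A s).map (starRingEnd 𝕜)) (A'.map (starRingEnd 𝕜)) t :=
  fun i j => (hA i j).star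

theorem HasEntrywiseDerivAt.mul [Fintype n] {C : ℝ → Matrix n l 𝕜} {C' : Matrix n l 𝕜}
    (hA : HasEntrywiseDerivAt A A' t) (hC : HasEntrywiseDerivAt C C' t) :
    HasEntrywiseDerivAt (fun s => A s * C s) (A' * C t + A t * C') t := fun i j => by
  simpa only [mul_apply, Matrix.add_apply, ← Finset.sum_add_distrib] using
    HasDerivAt.fun_sum fun k _ => (hA i k).fun_mul (hC k j)

end EntrywiseDeriv

/-- **Gauge-invariant rewriting of the Berry connection in a PT-fixed gauge
(pointwise integrand identity).**
Let `Φ t` be a differentiable family of orthonormal `N × m` frames (`Φ† Φ = 1`),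
`U t` a differentiable family of unitary matrices with `U ⬝ conj Φ = Φ`
(invariance under an antiunitary PT-type symmetry with unitary part `U`).
Here `Φ'` is the derivative of `Φ` and `Ud'` the derivative of `t ↦ (U t)†`.
Then for every `t`, `2 tr(Φ† Φ') = - tr(Φ† U (U†)' Φ)`. -/
theorem pt_berry_connection_identity (N m : ℕ)
    (Φ Φ' : ℝ → Matrix (Fin N) (Fin m) ℂ)
    (U Ud' : ℝ → Matrix (Fin N) (Fin N) ℂ)
    (hΦ' : ∀ (t : ℝ) (i : Fin N) (j : Fin m),
      HasDerivAt (fun s => Φ s i j) (Φ' t i j) t)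
    (hUd' : ∀ (t : ℝ) (i j : Fin N),
      HasDerivAt (fun s => (U s)ᴴ i j) (Ud' t i j) t)
    (hortho : ∀ t, (Φ t)ᴴ * Φ t = 1)
    (hunitary : ∀ t, U t ∈ Matrix.unitaryGroup (Fin N) ℂ)
    (hgauge : ∀ t, U t * (Φ t).map (starRingEnd ℂ) = Φ t) :
    ∀ t : ℝ,
      2 * ((Φ t)ᴴ * Φ' t).trace = -(((Φ t)ᴴ * U t * Ud' t * Φ t).trace) := by
  intro t
  have hΦt : HasEntrywiseDerivAt Φ (Φ' t) t := hΦ' t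
  have hUdt : HasEntrywiseDerivAt (fun s => (U s)ᴴ) (Ud' t) t := hUd' t
  have hUt : HasEntrywiseDerivAt U (Ud' t)ᴴ t := by
    simpa only [conjTranspose_conjTranspose] using hUdt.conjTranspose
  refine two_mul_trace_conjTranspose_mul_eq (hunitary t) (hgauge t) ?_ ?_ ?_
  · exact (hΦt.conjTranspose.mul hΦt).unique_of_forall_eq (hasEntrywiseDerivAt_const 1 t) hortho
  · exact (hUt.mul hUdt).unique_of_forall_eq (hasEntrywiseDerivAt_const 1 t)
      fun s => mem_unitaryGroup_iff.mp (hunitary s)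
  · exact (hUt.mul hΦt.map_star).unique_of_forall_eq hΦt hgauge
end

section
/- Let Φ : [0,1] → Mat_{N×m}(ℂ) be continuously differentiable with Φ(t)†·Φ(t) = 1_m for all t, and let U : [0,1] → Mat_{N×N}(ℂ) be continuously differentiable such that for all t: U(t) is unitary, U(t)·conj(U(t)) = 1_N, and there exists a matrix w(t) with U(t)·conj(Φ(t)) = Φ(t)·w(t). Then w(t) = Φ(t)†·U(t)·conj(Φ(t)) is unitary and symmetric (w(t)ᵀ = w(t)) for each t, and the following identity of complex numbers holds: exp( -2·∫₀¹ tr(Φ(t)†·Φ'(t)) dt ) = exp( ∫₀¹ tr( Φ(t)†·U(t)ᵀ·(conj∘U)'(t)·Φ(t) ) dt ) · det w(1) · (det w(0))⁻¹, where (conj∘U)'(t) is the derivative of t ↦ conj(U(t)). -/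
/-!
Since `U` is unitary with `U conj(U) = 1`, it is symmetric, hence so is the sewing matrix
`w = Φ† U conj(Φ)`; and `w` is unitary because `Φ w = U conj(Φ)` is an isometry. Thus
`conj(w) = w⁻¹`. The hypotheses differentiate `conj(U)`, so we differentiate
`conj(w) = Φᵀ conj(U) Φ` rather than `w`: by Jacobi's formula
`(det conj(w))' = det conj(w) · tr(w conj(w)')`, and by the sewing relation each of the two terms
of `conj(w)'` containing `Φ'` contributes `tr(Φ† Φ')`, the remaining one `tr(Φ† Uᵀ conj(U)' Φ)`.
Solving this scalar linear ODE and using `det conj(w) = (det w)⁻¹` gives the identity.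
-/

open Matrix

section MatrixCalculus

variable {𝕜 : Type*} [NontriviallyNormedField 𝕜] {l m n : Type*}

theorem hasDerivAt_matrix [Fintype n] {R : Type*} [NormedAddCommGroup R] [NormedSpace 𝕜 R]
    {A : 𝕜 → Matrix m n R} {A' : Matrix m n R} {t : 𝕜} :
    HasDerivAt A A' t ↔ ∀ i j, HasDerivAt (fun s => A s i j) (A' i j) t :=
  hasDerivAt_pi.trans <| forall_congr' fun _ => hasDerivAt_pi

theorem HasDerivAt.matrix_mul [Fintype m] [Fintype n] {R : Type*} [NormedRing R]
    [NormedAlgebra 𝕜 R] {A : 𝕜 → Matrix l m R} {B : 𝕜 → Matrix m n R} {A' : Matrix l m R}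
    {B' : Matrix m n R} {t : 𝕜} (hA : HasDerivAt A A' t) (hB : HasDerivAt B B' t) :
    HasDerivAt (fun s => A s * B s) (A' * B t + A t * B') t := by
  refine hasDerivAt_matrix.2 fun i j => ?_
  simp only [Matrix.add_apply, mul_apply, ← Finset.sum_add_distrib]
  exact HasDerivAt.fun_sum fun k _ =>
    (hasDerivAt_matrix.1 hA i k).fun_mul (hasDerivAt_matrix.1 hB k j)

theorem HasDerivAt.matrix_transpose [Fintype m] [Fintype n] {R : Type*} [NormedAddCommGroup R]
    [NormedSpace 𝕜 R] {A : 𝕜 → Matrix m n R} {A' : Matrix m n R} {t : 𝕜}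
    (hA : HasDerivAt A A' t) :
    HasDerivAt (fun s => (A s)ᵀ) A'ᵀ t :=
  hasDerivAt_matrix.2 fun i j => hasDerivAt_matrix.1 hA j i

theorem trace_adjugate_mul_eq_sum_det_updateRow [Fintype n] [DecidableEq n] {R : Type*}
    [CommRing R] (A B : Matrix n n R) :
    (A.adjugate * B).trace = ∑ i, (A.updateRow i (B i)).det := by
  rw [trace_mul_comm]
  refine Finset.sum_congr rfl fun i _ => ?_
  rw [← det_transpose, ← updateCol_transpose, ← cramer_apply, cramer_eq_adjugate_mulVec,
    ← adjugate_transpose, mulVec_transpose]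
  rfl

theorem HasDerivAt.matrix_det [Fintype n] [DecidableEq n] {𝕜' : Type*}
    [NontriviallyNormedField 𝕜'] [NormedAlgebra 𝕜 𝕜']
    {A : 𝕜 → Matrix n n 𝕜'} {A' : Matrix n n 𝕜'} {t : 𝕜} (hA : HasDerivAt A A' t) :
    HasDerivAt (fun s => (A s).det) ((A t).adjugate * A').trace t := by
  let D : ContinuousMultilinearMap 𝕜' (fun _ : n => n → 𝕜') 𝕜' :=
    ⟨(detRowAlternating : (n → 𝕜') [⋀^n]→ₗ[𝕜'] 𝕜').toMultilinearMap, continuous_id.matrix_det⟩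
  refine (((D.hasFDerivAt (A t)).restrictScalars 𝕜).comp_hasDerivAt t hA).congr_deriv ?_
  rw [trace_adjugate_mul_eq_sum_det_updateRow]
  exact D.linearDeriv_apply (A t) A'

theorem HasDerivAt.matrix_det_of_mul_eq_one [Fintype n] [DecidableEq n] {𝕜' : Type*}
    [NontriviallyNormedField 𝕜'] [NormedAlgebra 𝕜 𝕜'] {A : 𝕜 → Matrix n n 𝕜'}
    {A' B : Matrix n n 𝕜'} {t : 𝕜} (hA : HasDerivAt A A' t) (hB : B * A t = 1) :
    HasDerivAt (fun s => (A s).det) ((A t).det * (B * A').trace) t := by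
  have hadj : (A t).adjugate = (A t).det • B := by
    calc (A t).adjugate = B * A t * (A t).adjugate := by rw [hB, Matrix.one_mul]
      _ = (A t).det • B := by
        rw [Matrix.mul_assoc, mul_adjugate, Matrix.mul_smul, Matrix.mul_one]
  simpa only [hadj, Matrix.smul_mul, trace_smul, smul_eq_mul] using hA.matrix_det

end MatrixCalculus

theorem eq_mul_exp_integral_of_hasDerivAt {f g : ℝ → ℂ} (hg : Continuous g)
    (hf : ∀ t, HasDerivAt f (f t * g t) t) (a b : ℝ) :
    f b = f a * Complex.exp (∫ t in a..b, g t) := by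
  have hconst : ∀ t, HasDerivAt (fun s => f s * Complex.exp (-∫ u in a..s, g u)) 0 t :=
    fun t => by
      have hG := (hg.integral_hasStrictDerivAt a t).hasDerivAt
      exact ((hf t).fun_mul hG.fun_neg.cexp).congr_deriv (by ring)
  have hfG := is_const_of_deriv_eq_zero (fun t => (hconst t).differentiableAt)
    (fun t => (hconst t).deriv) b a
  simp only [intervalIntegral.integral_same, neg_zero, Complex.exp_zero, mul_one] at hfG
  rw [← hfG, mul_assoc, ← Complex.exp_add, neg_add_cancel, Complex.exp_zero, mul_one]

section Sewing

variable {R : Type*} [CommRing R] [StarRing R] {n m : Type*}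

theorem map_starRingEnd_conjTranspose (A : Matrix n m R) :
    Aᴴ.map (starRingEnd R) = Aᵀ := by
  ext; simp [starRingEnd_apply]

theorem conjTranspose_map_starRingEnd (A : Matrix n m R) :
    (A.map (starRingEnd R))ᴴ = Aᵀ := by
  ext; simp [starRingEnd_apply]

theorem transpose_map_starRingEnd (A : Matrix n m R) :
    (A.map (starRingEnd R))ᵀ = Aᴴ := by
  ext; simp [starRingEnd_apply]

theorem map_starRingEnd_map_starRingEnd (A : Matrix n m R) :
    (A.map (starRingEnd R)).map (starRingEnd R) = A := by
  ext; simp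

theorem map_starRingEnd_eq_star_of_transpose_eq_self {A : Matrix n n R} (h : Aᵀ = A) :
    A.map (starRingEnd R) = star A := by
  calc A.map (starRingEnd R) = Aᵀᴴ := by ext; simp [starRingEnd_apply]
    _ = star A := by rw [h, star_eq_conjTranspose]

theorem transpose_eq_self_of_mul_map_starRingEnd_eq_one [Fintype n] [DecidableEq n]
    {U : Matrix n n R} (hU : U ∈ unitaryGroup n R) (hUU : U * U.map (starRingEnd R) = 1) :
    Uᵀ = U := by
  have hstar : Uᴴ = U.map (starRingEnd R) :=
    left_inv_eq_right_inv (mem_unitaryGroup_iff'.1 hU) hUU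
  rw [← map_starRingEnd_conjTranspose, hstar, map_starRingEnd_map_starRingEnd]

def sewingMatrix [Fintype n] (Φ : Matrix n m R) (U : Matrix n n R) : Matrix m m R :=
  Φᴴ * U * Φ.map (starRingEnd R)

theorem mul_map_starRingEnd_eq_mul_sewingMatrix [Fintype n] [Fintype m] [DecidableEq m]
    {Φ : Matrix n m R} {U : Matrix n n R} (hΦ : Φᴴ * Φ = 1)
    (hsew : ∃ w : Matrix m m R, U * Φ.map (starRingEnd R) = Φ * w) :
    U * Φ.map (starRingEnd R) = Φ * sewingMatrix Φ U := by
  obtain ⟨w, hw⟩ := hsew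
  have hw' : sewingMatrix Φ U = w := by
    rw [sewingMatrix, Matrix.mul_assoc, hw, ← Matrix.mul_assoc, hΦ, Matrix.one_mul]
  rw [hw', hw]

theorem sewingMatrix_transpose [Fintype n] (Φ : Matrix n m R) {U : Matrix n n R} (hU : Uᵀ = U) :
    (sewingMatrix Φ U)ᵀ = sewingMatrix Φ U := by
  rw [sewingMatrix, transpose_mul, transpose_mul, transpose_map_starRingEnd, hU,
    ← map_starRingEnd_conjTranspose, conjTranspose_conjTranspose, Matrix.mul_assoc]

theorem sewingMatrix_mem_unitaryGroup [Fintype n] [Fintype m] [DecidableEq n] [DecidableEq m]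
    {Φ : Matrix n m R} {U : Matrix n n R} (hΦ : Φᴴ * Φ = 1) (hU : U ∈ unitaryGroup n R)
    (hsew : U * Φ.map (starRingEnd R) = Φ * sewingMatrix Φ U) :
    sewingMatrix Φ U ∈ unitaryGroup m R := by
  rw [mem_unitaryGroup_iff', star_eq_conjTranspose]
  calc (sewingMatrix Φ U)ᴴ * sewingMatrix Φ U
      = (Φ * sewingMatrix Φ U)ᴴ * (Φ * sewingMatrix Φ U) := by
        rw [conjTranspose_mul, Matrix.mul_assoc, ← Matrix.mul_assoc Φᴴ, hΦ, Matrix.one_mul]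
    _ = (Φᴴ * Φ).map (starRingEnd R) := by
        rw [← hsew, conjTranspose_mul, Matrix.mul_assoc, ← Matrix.mul_assoc Uᴴ,
          ← star_eq_conjTranspose, mem_unitaryGroup_iff'.1 hU, Matrix.one_mul, Matrix.map_mul,
          map_starRingEnd_conjTranspose, conjTranspose_map_starRingEnd]
    _ = 1 := by simp [hΦ]

theorem map_starRingEnd_sewingMatrix [Fintype n] (Φ : Matrix n m R) (U : Matrix n n R) :
    (sewingMatrix Φ U).map (starRingEnd R) = Φᵀ * U.map (starRingEnd R) * Φ := by
  rw [sewingMatrix, Matrix.map_mul, Matrix.map_mul, map_starRingEnd_conjTranspose,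
    map_starRingEnd_map_starRingEnd]

theorem sewingMatrix_mul_map_starRingEnd [Fintype n] [Fintype m] [DecidableEq n]
    [DecidableEq m] {Φ : Matrix n m R} {U : Matrix n n R} (hΦ : Φᴴ * Φ = 1)
    (hU : U ∈ unitaryGroup n R) (hUU : U * U.map (starRingEnd R) = 1)
    (hsew : U * Φ.map (starRingEnd R) = Φ * sewingMatrix Φ U) :
    sewingMatrix Φ U * (sewingMatrix Φ U).map (starRingEnd R) = 1 := by
  rw [map_starRingEnd_eq_star_of_transpose_eq_self
    (sewingMatrix_transpose Φ (transpose_eq_self_of_mul_map_starRingEnd_eq_one hU hUU))]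
  exact mem_unitaryGroup_iff.1 (sewingMatrix_mem_unitaryGroup hΦ hU hsew)

theorem trace_sewingMatrix_mul [Fintype n] [Fintype m] [DecidableEq n] [DecidableEq m]
    {Φ : Matrix n m R} {U : Matrix n n R} (hΦ : Φᴴ * Φ = 1) (hU : U ∈ unitaryGroup n R)
    (hUU : U * U.map (starRingEnd R) = 1)
    (hsew : U * Φ.map (starRingEnd R) = Φ * sewingMatrix Φ U) (Φ' : Matrix n m R)
    (V' : Matrix n n R) :
    (sewingMatrix Φ U * ((Φ'ᵀ * U.map (starRingEnd R) + Φᵀ * V') * Φ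
        + Φᵀ * U.map (starRingEnd R) * Φ')).trace
      = 2 * (Φᴴ * Φ').trace + (Φᴴ * Uᵀ * V' * Φ).trace := by
  have hw := sewingMatrix_mul_map_starRingEnd hΦ hU hUU hsew
  set w := sewingMatrix Φ U
  have hUT : Uᵀ = U := transpose_eq_self_of_mul_map_starRingEnd_eq_one hU hUU
  have hwT : wᵀ = w := sewingMatrix_transpose Φ hUT
  have hUΦ : U.map (starRingEnd R) * Φ = Φ.map (starRingEnd R) * w.map (starRingEnd R) := by
    simpa only [Matrix.map_mul, map_starRingEnd_map_starRingEnd] using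
      congrArg (Matrix.map · (starRingEnd R)) hsew
  have hwΦU : w * Φᵀ * U.map (starRingEnd R) = Φᴴ := by
    have hΦU : Φᵀ * U.map (starRingEnd R) = w.map (starRingEnd R) * Φᴴ := by
      have := congrArg transpose hUΦ
      rwa [transpose_mul, transpose_mul, transpose_map_starRingEnd Φ, ← transpose_map,
        ← transpose_map, hUT, hwT] at this
    rw [Matrix.mul_assoc, hΦU, ← Matrix.mul_assoc, hw, Matrix.one_mul]
  have hwΦ : w * Φᵀ = Φᴴ * U := by
    rw [← hwΦU, Matrix.mul_assoc _ (U.map _), mul_eq_one_comm.1 hUU, Matrix.mul_one]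
  have h₁ : (w * (Φ'ᵀ * U.map (starRingEnd R) * Φ)).trace = (Φᴴ * Φ').trace := by
    rw [trace_mul_comm, Matrix.mul_assoc Φ'ᵀ, hUΦ, Matrix.mul_assoc, Matrix.mul_assoc,
      mul_eq_one_comm.1 hw, Matrix.mul_one, ← trace_transpose, transpose_mul,
      transpose_transpose, transpose_map_starRingEnd]
  have h₂ : (w * (Φᵀ * V' * Φ)).trace = (Φᴴ * Uᵀ * V' * Φ).trace := by
    rw [hUT, ← hwΦ]
    simp only [Matrix.mul_assoc]
  have h₃ : (w * (Φᵀ * U.map (starRingEnd R) * Φ')).trace = (Φᴴ * Φ').trace := by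
    rw [← Matrix.mul_assoc, ← Matrix.mul_assoc, hwΦU]
  rw [Matrix.add_mul, Matrix.mul_add, Matrix.mul_add, trace_add, trace_add, h₁, h₂, h₃]
  ring

theorem hasDerivAt_det_map_starRingEnd_sewingMatrix {𝕜 : Type*} [RCLike 𝕜] [Fintype n]
    [Fintype m] [DecidableEq n] [DecidableEq m] {Φ : ℝ → Matrix n m 𝕜} {U : ℝ → Matrix n n 𝕜}
    {Φ' : Matrix n m 𝕜} {V' : Matrix n n 𝕜} {t : ℝ} (hΦd : HasDerivAt Φ Φ' t)
    (hVd : HasDerivAt (fun s => (U s).map (starRingEnd 𝕜)) V' t) (hΦ : (Φ t)ᴴ * Φ t = 1)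
    (hU : U t ∈ unitaryGroup n 𝕜) (hUU : U t * (U t).map (starRingEnd 𝕜) = 1)
    (hsew : U t * (Φ t).map (starRingEnd 𝕜) = Φ t * sewingMatrix (Φ t) (U t)) :
    HasDerivAt (fun s => ((sewingMatrix (Φ s) (U s)).map (starRingEnd 𝕜)).det)
      (((sewingMatrix (Φ t) (U t)).map (starRingEnd 𝕜)).det
        * (2 * ((Φ t)ᴴ * Φ').trace + ((Φ t)ᴴ * (U t)ᵀ * V' * Φ t).trace)) t := by
  have hw := sewingMatrix_mul_map_starRingEnd hΦ hU hUU hsew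
  simp only [map_starRingEnd_sewingMatrix] at hw ⊢
  rw [← trace_sewingMatrix_mul hΦ hU hUU hsew]
  exact ((hΦd.matrix_transpose.matrix_mul hVd).matrix_mul hΦd).matrix_det_of_mul_eq_one hw

end Sewing

/-- **ℤ₂ quantization source for the symmetry-enriched Berry phase in an EAZ class AI
sector.**
Let `Φ t` (`t ∈ [0,1]`) be a C¹ family of orthonormal `N × m` frames (`Φ† Φ = 1`), and
`U t` a C¹ family of unitary matrices with `U ⬝ conj U = 1` (class AI antiunitary
symmetry squaring to `+1`) such that `U ⬝ conj Φ = Φ ⬝ w` for some matrix `w`.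
Here `Φ'` is the derivative of `Φ` and `Uc'` the derivative of `t ↦ conj (U t)`.
Then the sewing matrix `w t = Φ(t)† U(t) conj(Φ(t))` is unitary and symmetric, and
`exp(-2∫₀¹ tr(Φ† Φ')) = exp(∫₀¹ tr(Φ† Uᵀ (conj U)' Φ)) · det w(1) · (det w(0))⁻¹`. -/
theorem class_AI_wilson_line_sewing (N m : ℕ)
    (Φ Φ' : ℝ → Matrix (Fin N) (Fin m) ℂ)
    (U Uc' : ℝ → Matrix (Fin N) (Fin N) ℂ)
    (hΦ' : ∀ (t : ℝ) (i : Fin N) (j : Fin m),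
      HasDerivAt (fun s => Φ s i j) (Φ' t i j) t)
    (hΦ'cont : ∀ (i : Fin N) (j : Fin m), Continuous fun t => Φ' t i j)
    (hUc' : ∀ (t : ℝ) (i j : Fin N),
      HasDerivAt (fun s => (U s).map (starRingEnd ℂ) i j) (Uc' t i j) t)
    (hUc'cont : ∀ i j : Fin N, Continuous fun t => Uc' t i j)
    (hortho : ∀ t, (Φ t)ᴴ * Φ t = 1)
    (hunitary : ∀ t, U t ∈ Matrix.unitaryGroup (Fin N) ℂ)
    (hUconj : ∀ t, U t * (U t).map (starRingEnd ℂ) = 1)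
    (hsew : ∀ t, ∃ wt : Matrix (Fin m) (Fin m) ℂ,
      U t * (Φ t).map (starRingEnd ℂ) = Φ t * wt) :
    (∀ t, ((Φ t)ᴴ * U t * (Φ t).map (starRingEnd ℂ)) ∈ Matrix.unitaryGroup (Fin m) ℂ ∧
        ((Φ t)ᴴ * U t * (Φ t).map (starRingEnd ℂ))ᵀ
          = (Φ t)ᴴ * U t * (Φ t).map (starRingEnd ℂ)) ∧
    Complex.exp (-2 * ∫ t in (0:ℝ)..1, ((Φ t)ᴴ * Φ' t).trace)
      = Complex.exp (∫ t in (0:ℝ)..1, ((Φ t)ᴴ * (U t)ᵀ * Uc' t * Φ t).trace)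
        * ((Φ 1)ᴴ * U 1 * (Φ 1).map (starRingEnd ℂ)).det
        * (((Φ 0)ᴴ * U 0 * (Φ 0).map (starRingEnd ℂ)).det)⁻¹ := by
  have hsew' : ∀ t, U t * (Φ t).map (starRingEnd ℂ) = Φ t * sewingMatrix (Φ t) (U t) :=
    fun t => mul_map_starRingEnd_eq_mul_sewingMatrix (hortho t) (hsew t)
  refine ⟨fun t => ⟨sewingMatrix_mem_unitaryGroup (hortho t) (hunitary t) (hsew' t),
    sewingMatrix_transpose (Φ t) (transpose_eq_self_of_mul_map_starRingEnd_eq_one (hunitary t)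
      (hUconj t))⟩, ?_⟩
  have hdet_mul : ∀ t, (sewingMatrix (Φ t) (U t)).det
      * ((sewingMatrix (Φ t) (U t)).map (starRingEnd ℂ)).det = 1 := fun t => by
    rw [← det_mul, sewingMatrix_mul_map_starRingEnd (hortho t) (hunitary t) (hUconj t) (hsew' t),
      det_one]
  have hΦc : Continuous Φ := continuous_matrix fun i j =>
    continuous_iff_continuousAt.2 fun t => (hΦ' t i j).continuousAt
  have hUc : Continuous U := by
    have hconj : Continuous fun t => (U t).map (starRingEnd ℂ) := continuous_matrix fun i j =>
      continuous_iff_continuousAt.2 fun t => (hUc' t i j).continuousAt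
    simpa only [map_starRingEnd_map_starRingEnd] using hconj.matrix_map Complex.continuous_conj
  have h₁ : Continuous fun t => ((Φ t)ᴴ * Φ' t).trace :=
    (hΦc.matrix_conjTranspose.matrix_mul (continuous_matrix hΦ'cont)).matrix_trace
  have h₂ : Continuous fun t => ((Φ t)ᴴ * (U t)ᵀ * Uc' t * Φ t).trace :=
    (((hΦc.matrix_conjTranspose.matrix_mul hUc.matrix_transpose).matrix_mul
      (continuous_matrix hUc'cont)).matrix_mul hΦc).matrix_trace
  have hode := eq_mul_exp_integral_of_hasDerivAt ((h₁.const_mul 2).fun_add h₂)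
    (fun t => hasDerivAt_det_map_starRingEnd_sewingMatrix (hasDerivAt_matrix.2 (hΦ' t))
      (hasDerivAt_matrix.2 (hUc' t)) (hortho t) (hunitary t) (hUconj t) (hsew' t)) 0 1
  rw [eq_inv_of_mul_eq_one_right (hdet_mul 0), eq_inv_of_mul_eq_one_right (hdet_mul 1),
    intervalIntegral.integral_add ((h₁.const_mul 2).intervalIntegrable _ _)
      (h₂.intervalIntegrable _ _), intervalIntegral.integral_const_mul] at hode
  change _ = _ * (sewingMatrix (Φ 1) (U 1)).det * (sewingMatrix (Φ 0) (U 0)).det⁻¹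
  rw [← inv_inv (sewingMatrix (Φ 1) (U 1)).det, hode, mul_inv, inv_inv, ← Complex.exp_neg]
  field_simp [left_ne_zero_of_mul_eq_one (hdet_mul 0)]
  rw [← Complex.exp_add]
  ring_nf
end
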